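/- arXiv:2305.16536 — 9 statements merged into one kernel-verified Lean document; each statement's English description precedes it below -/
import Mathlib

section
/- (Deterministic core of Theorem 4.2: minimizing the supervised contrastive loss does not imply class collapse.) In the structured contrastive dataset with p ≥ 3, for every c > 0 there exists a global minimizer W* ∈ ℝ^{p×D} of L_SCL such that ‖W* v_2‖ ≥ c. In particular, not every global minimizer of the supervised contrastive loss annihilates the subclass feature v_2. -/
/-!
If `B = W₀ᵀW₀` satisfies `M B M = M⁺`, completing the square gives
`L(W) = Tr((WᵀW - B) M (WᵀW - B) M) - Tr(B M B M)`, and the first term is nonnegative because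
`M` is positive semidefinite; so `W₀` is a global minimiser.
With `z_ε = v₀ + (ε / φ₁) v₁` one has `⟪x_i, z_ε⟫ = 1 + ε y_i`, hence `M z_ε = x̄_ε`. The vector
`u = v₂ - ∑ⱼ (⟪x_j, v₂⟫ / σ_ξ) v_{K+1+j}` is orthogonal to every `x_i`, so `M u = 0`, while
`⟪u, v₂⟫ = 1`. Thus `B = ½ z₊z₊ᵀ + ½ z₋z₋ᵀ + c² uuᵀ` works for every `c`, and the
corresponding minimiser, with rows `z₊/√2, z₋/√2, c u, 0, …`, maps `v₂` to a vector of norm `c`.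
-/

open Matrix

/-- The contrastive trace loss `Tr(-2 WᵀW P + WᵀW M WᵀW M)`. -/
noncomputable def CLTraceLoss {p D : ℕ} (P M : Matrix (Fin D) (Fin D) ℝ)
    (W : Matrix (Fin p) (Fin D) ℝ) : ℝ :=
  Matrix.trace ((-2 : ℝ) • (Wᵀ * W * P) + Wᵀ * W * M * (Wᵀ * W) * M)

namespace Matrix

open scoped ComplexOrder MatrixOrder

variable {ι n 𝕜 : Type*} [Fintype ι] [Fintype n] [RCLike 𝕜]

theorem PosSemidef.trace_mul_nonneg [DecidableEq n] {A B : Matrix n n 𝕜} (hA : A.PosSemidef)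
    (hB : B.PosSemidef) : 0 ≤ (A * B).trace := by
  obtain ⟨R, rfl⟩ : ∃ R : Matrix n n 𝕜, B = Rᴴ * R := by
    refine ⟨CFC.sqrt B, ?_⟩
    rw [(CFC.sqrt_nonneg B).posSemidef.isHermitian.eq, CFC.sqrt_mul_sqrt_self B hB.nonneg]
  rw [← mul_assoc, trace_mul_comm, ← mul_assoc]
  exact (hA.mul_mul_conjTranspose_same R).trace_nonneg

theorem PosSemidef.trace_mul_mul_mul_nonneg [DecidableEq n] {M S : Matrix n n 𝕜} (hM : M.PosSemidef)
    (hS : S.IsHermitian) : 0 ≤ (S * M * S * M).trace := by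
  simpa only [hS.eq] using (hM.conjTranspose_mul_mul_same S).trace_mul_nonneg hM

theorem sum_vecMulVec_self_mulVec (x : ι → n → ℝ) (w : n → ℝ) :
    (∑ i, vecMulVec (x i) (x i)) *ᵥ w = ∑ i, (x i ⬝ᵥ w) • x i := by
  simp [sum_mulVec, vecMulVec_mulVec]

theorem posSemidef_sum_vecMulVec_self (x : ι → n → ℝ) :
    (∑ i, vecMulVec (x i) (x i)).PosSemidef :=
  posSemidef_sum _ fun i _ => by simpa using posSemidef_vecMulVec_self_star (x i)

theorem transpose_mul_self_eq_sum_vecMulVec {m : Type*} (W : Matrix ι m ℝ) :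
    Wᵀ * W = ∑ r, vecMulVec (W r) (W r) := by
  ext a b
  simp [mul_apply, vecMulVec_apply, sum_apply]

theorem IsHermitian.mul_transpose_mul_self_mul {M : Matrix n n ℝ}
    (hM : M.IsHermitian) (W : Matrix ι n ℝ) :
    M * (Wᵀ * W) * M = ∑ r, vecMulVec (M *ᵥ W r) (M *ᵥ W r) := by
  have hMt : Mᵀ = M := hM
  simp only [transpose_mul_self_eq_sum_vecMulVec, Finset.mul_sum, Finset.sum_mul, mul_vecMulVec,
    vecMulVec_mul, ← mulVec_transpose, hMt]

end Matrix

section Loss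

variable {p D : ℕ} {P M B : Matrix (Fin D) (Fin D) ℝ}

theorem CLTraceLoss_eq_trace_sub (hP : M * B * M = P) (W : Matrix (Fin p) (Fin D) ℝ) :
    CLTraceLoss P M W
      = ((Wᵀ * W - B) * M * (Wᵀ * W - B) * M).trace - (B * M * B * M).trace := by
  have hcomm := trace_mul_comm (B * M) (Wᵀ * W * M)
  simp only [CLTraceLoss, ← hP, sub_mul, mul_sub, trace_sub, trace_add, trace_smul,
    mul_assoc, smul_eq_mul] at hcomm ⊢
  linarith

theorem CLTraceLoss_le_of_mul_gram_mul_eq {W₀ : Matrix (Fin p) (Fin D) ℝ} (hM : M.PosSemidef)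
    (hP : M * (W₀ᵀ * W₀) * M = P) (W : Matrix (Fin p) (Fin D) ℝ) :
    CLTraceLoss P M W₀ ≤ CLTraceLoss P M W := by
  simp only [CLTraceLoss_eq_trace_sub hP, sub_self, zero_mul, trace_zero, sub_le_sub_iff_right]
  exact hM.trace_mul_mul_mul_nonneg
    ((isHermitian_conjTranspose_mul_self W).sub (isHermitian_conjTranspose_mul_self W₀))

end Loss

theorem sum_one_add_mul_smul_eq {ι E : Type*} [Fintype ι] [AddCommGroup E] [Module ℝ E]
    {y : ι → ℝ} (hy : ∀ i, y i = 1 ∨ y i = -1) {ε : ℝ} (hε : ε = 1 ∨ ε = -1) (x : ι → E) :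
    ∑ i, (1 + ε * y i) • x i = (2 : ℝ) • ∑ i, {j | y j = ε}.indicator x i := by
  rw [Finset.smul_sum]
  refine Finset.sum_congr rfl fun i _ => ?_
  rcases hy i with h | h <;> rcases hε with rfl | rfl <;> simp [Set.indicator_apply, h] <;> norm_num

section StructuredDataset

variable {K N D : ℕ} {v : ℕ → Fin D → ℝ}

noncomputable def classDirection (v : ℕ → Fin D → ℝ) (φ₁ ε : ℝ) : Fin D → ℝ :=
  v 0 + (ε / φ₁) • v 1

noncomputable def subclassDirection (v : ℕ → Fin D → ℝ) (K : ℕ) (b : Fin N → ℝ) (σ : ℝ) :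
    Fin D → ℝ :=
  v 2 - ∑ j, (b j / σ) • v (K + 1 + j)

theorem dotProduct_classDirection
    (hv : ∀ i j, i ≤ K + N → j ≤ K + N → v i ⬝ᵥ v j = if i = j then 1 else 0)
    {k : ℕ} (hk : 3 ≤ k ∧ k ≤ K) (i : Fin N) {φ₁ : ℝ} (hφ₁ : φ₁ ≠ 0) (y b r σ ε : ℝ) :
    (v 0 + (y * φ₁) • v 1 + b • v 2 + r • v k + σ • v (K + 1 + i)) ⬝ᵥ classDirection v φ₁ ε
      = 1 + ε * y := by
  simp (disch := omega) only [classDirection, add_dotProduct, dotProduct_add, smul_dotProduct,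
    dotProduct_smul, hv, if_neg, ↓reduceIte, smul_eq_mul]
  field_simp
  ring

theorem dotProduct_subclassDirection
    (hv : ∀ i j, i ≤ K + N → j ≤ K + N → v i ⬝ᵥ v j = if i = j then 1 else 0)
    {k : ℕ} (hk : 3 ≤ k ∧ k ≤ K) (i : Fin N) {σ : ℝ} (hσ : σ ≠ 0) (b : Fin N → ℝ) (a r : ℝ) :
    (v 0 + a • v 1 + b i • v 2 + r • v k + σ • v (K + 1 + i)) ⬝ᵥ subclassDirection v K b σ
      = 0 := by
  simp (disch := omega) only [subclassDirection, add_dotProduct, dotProduct_sub, dotProduct_sum,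
    smul_dotProduct, dotProduct_smul, hv, if_neg, ↓reduceIte, smul_eq_mul]
  simp only [mul_zero, add_zero, mul_one, zero_add, Nat.add_left_cancel_iff, Fin.val_inj, mul_ite,
    Finset.sum_ite_eq, Finset.mem_univ, ↓reduceIte]
  field_simp
  ring

theorem classDirection_dotProduct_two
    (hv : ∀ i j, i ≤ K + N → j ≤ K + N → v i ⬝ᵥ v j = if i = j then 1 else 0) (hK : 2 ≤ K)
    (φ₁ ε : ℝ) : classDirection v φ₁ ε ⬝ᵥ v 2 = 0 := by
  simp (disch := omega) [classDirection, add_dotProduct, smul_dotProduct, hv]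

theorem subclassDirection_dotProduct_two
    (hv : ∀ i j, i ≤ K + N → j ≤ K + N → v i ⬝ᵥ v j = if i = j then 1 else 0) (hK : 2 ≤ K)
    (b : Fin N → ℝ) (σ : ℝ) : subclassDirection v K b σ ⬝ᵥ v 2 = 1 := by
  simp (disch := omega) [subclassDirection, sub_dotProduct, sum_dotProduct, smul_dotProduct, hv,
    if_neg]

end StructuredDataset

theorem stmt_0_general
    (m K n D : ℕ)
    (hK : 3 ≤ K)
    (φ : ℕ → ℝ) (hφ : ∀ j, 1 ≤ j → j ≤ K → 0 < φ j)
    (μ σξ : ℝ) (hσ : 0 < σξ)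
    (v : ℕ → Fin D → ℝ)
    (hortho : ∀ i j, i ≤ K + m * n → j ≤ K + m * n →
      (∑ t, v i t * v j t) = if i = j then (1 : ℝ) else 0)
    (y ysub ρ : Fin (m * n) → ℝ) (κ : Fin (m * n) → ℕ)
    (hy : ∀ i, y i = 1 ∨ y i = -1)
    (hκ : ∀ i, 3 ≤ κ i ∧ κ i ≤ K)
    (x : Fin (m * n) → Fin D → ℝ)
    (hx : ∀ i, x i = fun t => v 0 t + y i * φ 1 * v 1 t + (ysub i * φ 2 + μ) * v 2 t
      + ρ i * φ (κ i) * v (κ i) t + σξ * v (K + 1 + i.1) t)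
    (M Mp : Matrix (Fin D) (Fin D) ℝ)
    (hM : M = ((m * n : ℝ))⁻¹ • ∑ i, Matrix.vecMulVec (x i) (x i))
    (xbar : ℝ → Fin D → ℝ)
    (hxbar : ∀ ε, xbar ε = (2 / (m * n : ℝ)) •
      ∑ i, Set.indicator {j : Fin (m * n) | y j = ε} x i)
    (hMp : Mp = (2 : ℝ)⁻¹ • (Matrix.vecMulVec (xbar 1) (xbar 1)
      + Matrix.vecMulVec (xbar (-1)) (xbar (-1))))
    (p : ℕ) (hp : 3 ≤ p) :
    ∀ c : ℝ, 0 < c → ∃ Wstar : Matrix (Fin p) (Fin D) ℝ,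
      (∀ W : Matrix (Fin p) (Fin D) ℝ, CLTraceLoss Mp M Wstar ≤ CLTraceLoss Mp M W) ∧
      c ≤ Real.sqrt (∑ j, (Wstar.mulVec (v 2) j) ^ 2) := by
  intro c hc
  obtain ⟨q, rfl⟩ : ∃ q, p = q + 3 := ⟨p - 3, by omega⟩
  have hx' (i : Fin (m * n)) : x i = v 0 + (y i * φ 1) • v 1 + (ysub i * φ 2 + μ) • v 2
      + (ρ i * φ (κ i)) • v (κ i) + σξ • v (K + 1 + i) := hx i
  set z := classDirection v (φ 1)
  set u := subclassDirection v K (fun j => ysub j * φ 2 + μ) σξ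
  have hMz (ε : ℝ) (hε : ε = 1 ∨ ε = -1) : M *ᵥ z ε = xbar ε := by
    have hxz (i : Fin (m * n)) : x i ⬝ᵥ z ε = 1 + ε * y i := by
      rw [hx']
      exact dotProduct_classDirection hortho (hκ i) i (hφ 1 le_rfl (by omega)).ne' _ _ _ _ _
    simp only [hM, hxbar, smul_mulVec, sum_vecMulVec_self_mulVec, hxz,
      sum_one_add_mul_smul_eq hy hε, smul_smul, div_eq_inv_mul]
  have hMu : M *ᵥ u = 0 := by
    have hxu (i : Fin (m * n)) : x i ⬝ᵥ u = 0 := by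
      rw [hx']
      exact dotProduct_subclassDirection hortho (hκ i) i hσ.ne' (fun j => ysub j * φ 2 + μ) _ _
    simp [hM, smul_mulVec, sum_vecMulVec_self_mulVec, hxu]
  have hMpsd : M.PosSemidef := hM ▸ (posSemidef_sum_vecMulVec_self x).smul (by positivity)
  let W : Matrix (Fin (q + 3)) (Fin D) ℝ :=
    vecCons (√2⁻¹ • z 1) (vecCons (√2⁻¹ • z (-1)) (vecCons (c • u) 0))
  refine ⟨W, CLTraceLoss_le_of_mul_gram_mul_eq hMpsd ?_, ?_⟩
  · have hs : (√2)⁻¹ * (√2)⁻¹ = (2 : ℝ)⁻¹ := by rw [← mul_inv, Real.mul_self_sqrt zero_le_two]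
    rw [hMpsd.isHermitian.mul_transpose_mul_self_mul]
    simp [Fin.sum_univ_succ, W, mulVec_smul, hMz, hMu, hMp, smul_vecMulVec, vecMulVec_smul,
      smul_smul, hs]
  · have hWv (r : Fin (q + 3)) : (W *ᵥ v 2) r = W r ⬝ᵥ v 2 := rfl
    have hz2 (ε : ℝ) : z ε ⬝ᵥ v 2 = 0 := classDirection_dotProduct_two hortho (by omega) _ _
    have hu2 : u ⬝ᵥ v 2 = 1 := subclassDirection_dotProduct_two hortho (by omega) _ _
    simp only [Fin.sum_univ_succ, hWv]
    simp [W, hz2, hu2, hc.le]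

theorem stmt_0
    (m K n D : ℕ)
    (hm : 1 ≤ m) (hK : 3 ≤ K) (hn : 1 ≤ n) (hdiv : 8 * (K - 2) ∣ n)
    (hD : K + 1 + m * n ≤ D)
    (φ : ℕ → ℝ) (hφ : ∀ j, 1 ≤ j → j ≤ K → 0 < φ j)
    (μ σξ : ℝ) (hσ : 0 < σξ)
    (v : ℕ → Fin D → ℝ)
    (hortho : ∀ i j, i ≤ K + m * n → j ≤ K + m * n →
      (∑ t, v i t * v j t) = if i = j then (1 : ℝ) else 0)
    (y ysub ρ : Fin (m * n) → ℝ) (κ : Fin (m * n) → ℕ)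
    (hy : ∀ i, y i = 1 ∨ y i = -1)
    (hysub : ∀ i, ysub i = 1 ∨ ysub i = -1)
    (hρ : ∀ i, ρ i = 1 ∨ ρ i = -1)
    (hκ : ∀ i, 3 ≤ κ i ∧ κ i ≤ K)
    (hblock : ∀ i j : Fin (m * n), i.1 / m = j.1 / m →
      y i = y j ∧ ysub i = ysub j ∧ κ i = κ j ∧ ρ i = ρ j)
    (hbal : ∀ (a b r : ℝ) (c : ℕ), (a = 1 ∨ a = -1) → (b = 1 ∨ b = -1) →
      (r = 1 ∨ r = -1) → 3 ≤ c → c ≤ K →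
      Set.ncard {i : Fin (m * n) | y i = a ∧ ysub i = b ∧ κ i = c ∧ ρ i = r}
        = m * n / (8 * (K - 2)))
    (x : Fin (m * n) → Fin D → ℝ)
    (hx : ∀ i, x i = fun t => v 0 t + y i * φ 1 * v 1 t + (ysub i * φ 2 + μ) * v 2 t
      + ρ i * φ (κ i) * v (κ i) t + σξ * v (K + 1 + i.1) t)
    (M Mp : Matrix (Fin D) (Fin D) ℝ)
    (hM : M = ((m * n : ℝ))⁻¹ • ∑ i, Matrix.vecMulVec (x i) (x i))
    (xbar : ℝ → Fin D → ℝ)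
    (hxbar : ∀ ε, xbar ε = (2 / (m * n : ℝ)) •
      ∑ i, Set.indicator {j : Fin (m * n) | y j = ε} x i)
    (hMp : Mp = (2 : ℝ)⁻¹ • (Matrix.vecMulVec (xbar 1) (xbar 1)
      + Matrix.vecMulVec (xbar (-1)) (xbar (-1))))
    (p : ℕ) (hp : 3 ≤ p) :
    ∀ c : ℝ, 0 < c → ∃ Wstar : Matrix (Fin p) (Fin D) ℝ,
      (∀ W : Matrix (Fin p) (Fin D) ℝ, CLTraceLoss Mp M Wstar ≤ CLTraceLoss Mp M W) ∧
      c ≤ Real.sqrt (∑ j, (Wstar.mulVec (v 2) j) ^ 2) :=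
  stmt_0_general m K n D hK φ hφ μ σξ hσ v hortho y ysub ρ κ hy hκ x hx M Mp hM xbar hxbar hMp p hp
end

section
/- (Lemma B.1.) The product of two real positive semidefinite matrices is diagonalizable: if A and B are N×N real positive semidefinite matrices, then there exist an invertible real matrix S and a diagonal real matrix Λ such that A B = S Λ S⁻¹. -/
/-!
With `C = √A`, the matrix `H = C B C` is positive semidefinite and `A B C = C H`, so `C` maps the
eigenvectors `u` of `H` with eigenvalue `μ ≠ 0` to eigenvectors of `A B` with the same eigenvalue;
they stay independent because `C B` sends `C u` back to `μ u`. As `A B = C (C √B) √B` and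
`H = (C √B)(C √B)ᴴ`, there are at least `rank (A B)` of them, so together with a basis of
`ker (A B)` they form a basis of eigenvectors of `A B`.
-/

open Matrix Module LinearMap
open scoped MatrixOrder ComplexOrder

namespace Module.End

variable {K V : Type*} [Field K] [AddCommGroup V] [Module K V]

theorem disjoint_span_ker_of_apply_eq_smul {ι : Type*} (f : End K V) {v : ι → V} {μ : ι → K}
    (hμ : ∀ i, μ i ≠ 0) (hfv : ∀ i, f (v i) = μ i • v i) :
    Disjoint (Submodule.span K (Set.range v)) (ker f) := by
  have hle : Submodule.span K (Set.range v) ≤ ⨆ ν ∈ ({0}ᶜ : Set K), f.eigenspace ν := by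
    rw [Submodule.span_le]
    rintro _ ⟨i, rfl⟩
    exact Submodule.mem_iSup_of_mem (μ i) <| Submodule.mem_iSup_of_mem (hμ i) <|
      mem_eigenspace_iff.mpr (hfv i)
  rw [← eigenspace_zero]
  exact (f.eigenspaces_iSupIndep.disjoint_biSup (by simp)).symm.mono_left hle

variable [FiniteDimensional K V]

theorem exists_basis_apply_eq_smul_of_linearIndependent {ι : Type*} [Fintype ι] (f : End K V)
    {v : ι → V} (hv : LinearIndependent K v) {μ : ι → K} (hμ : ∀ i, μ i ≠ 0)
    (hfv : ∀ i, f (v i) = μ i • v i) (hrank : finrank K (range f) ≤ Fintype.card ι) :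
    ∃ (b : Basis (ι ⊕ Fin (finrank K (ker f))) K V) (ν : ι ⊕ Fin (finrank K (ker f)) → K),
      ∀ i, f (b i) = ν i • b i := by
  let k := Module.finBasis K (ker f)
  have hk : LinearIndependent K ((ker f).subtype ∘ k) :=
    k.linearIndependent.map' _ (Submodule.ker_subtype _)
  have hdisj : Disjoint (Submodule.span K (Set.range v))
      (Submodule.span K (Set.range ((ker f).subtype ∘ k))) := by
    refine (f.disjoint_span_ker_of_apply_eq_smul hμ hfv).mono_right ?_
    rw [Submodule.span_le]
    rintro _ ⟨j, rfl⟩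
    exact (k j).2
  have hw := hv.sum_type hk hdisj
  have hcard : Fintype.card (ι ⊕ Fin (finrank K (ker f))) = finrank K V := by
    have := hw.fintype_card_le_finrank
    have := f.finrank_range_add_finrank_ker
    simp only [Fintype.card_sum, Fintype.card_fin] at *
    omega
  refine ⟨basisOfLinearIndependentOfCardEqFinrank' _ hw hcard, Sum.elim μ 0, ?_⟩
  rintro (i | j)
  · simpa using hfv i
  · simp

end Module.End

namespace Matrix

variable {n K : Type*} [Fintype n] [DecidableEq n] [Field K]

theorem exists_eq_mul_diagonal_mul_inv_of_basis {ι : Type*} [Fintype ι] (M : Matrix n n K)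
    (b : Basis ι K (n → K)) (μ : ι → K) (hb : ∀ i, M *ᵥ b i = μ i • b i) :
    ∃ (S : Matrix n n K) (lam : n → K), IsUnit S.det ∧ M = S * diagonal lam * S⁻¹ := by
  let e : ι ≃ n := b.indexEquiv (Pi.basisFun K n)
  let b' := b.reindex e
  have hdiag : LinearMap.toMatrix b' b' (toLin' M) = diagonal (μ ∘ e.symm) := by
    ext i j
    rcases eq_or_ne i j with rfl | hij <;> simp [LinearMap.toMatrix_apply, b', *]
  have hinv : (Pi.basisFun K n).toMatrix b' * b'.toMatrix (Pi.basisFun K n) = 1 :=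
    Basis.toMatrix_mul_toMatrix_flip _ _
  refine ⟨(Pi.basisFun K n).toMatrix b', μ ∘ e.symm, isUnit_det_of_right_inverse hinv, ?_⟩
  rw [inv_eq_right_inv hinv, ← hdiag, basis_toMatrix_mul_linearMap_toMatrix_mul_basis_toMatrix,
    LinearMap.toMatrix_eq_toMatrix', LinearMap.toMatrix'_toLin']

theorem exists_eq_mul_diagonal_mul_inv_of_linearIndependent {ι : Type*} [Fintype ι]
    (M : Matrix n n K) {v : ι → n → K} (hv : LinearIndependent K v) {μ : ι → K}
    (hμ : ∀ i, μ i ≠ 0) (hMv : ∀ i, M *ᵥ v i = μ i • v i) (hrank : M.rank ≤ Fintype.card ι) :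
    ∃ (S : Matrix n n K) (lam : n → K), IsUnit S.det ∧ M = S * diagonal lam * S⁻¹ := by
  obtain ⟨b, ν, hb⟩ := 
    Module.End.exists_basis_apply_eq_smul_of_linearIndependent M.mulVecLin hv hμ hMv hrank
  exact exists_eq_mul_diagonal_mul_inv_of_basis M b ν hb

end Matrix

namespace Matrix.PosSemidef

variable {n 𝕜 : Type*} [Fintype n] [DecidableEq n] [RCLike 𝕜] {A B : Matrix n n 𝕜}

theorem rank_mul_le_rank_sqrt_mul_mul_sqrt (hA : A.PosSemidef) (hB : B.PosSemidef) :
    (A * B).rank ≤ (CFC.sqrt A * B * CFC.sqrt A).rank := by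
  set C := CFC.sqrt A
  set D := CFC.sqrt B
  have hCH : Cᴴ = C := (CFC.sqrt_nonneg A).posSemidef.isHermitian
  have hDH : Dᴴ = D := (CFC.sqrt_nonneg B).posSemidef.isHermitian
  have hAB : A * B = C * ((C * D) * D) := by
    rw [← CFC.sqrt_mul_sqrt_self A hA.nonneg, ← CFC.sqrt_mul_sqrt_self B hB.nonneg]
    noncomm_ring
  have hCBC : C * B * C = (C * D) * (C * D)ᴴ := by
    rw [conjTranspose_mul, hCH, hDH, ← CFC.sqrt_mul_sqrt_self B hB.nonneg]
    noncomm_ring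
  calc (A * B).rank ≤ ((C * D) * D).rank := hAB ▸ rank_mul_le_right _ _
    _ ≤ (C * D).rank := rank_mul_le_left _ _
    _ = (C * B * C).rank := by rw [hCBC, rank_self_mul_conjTranspose]

theorem exists_mul_eq_mul_diagonal_mul_inv (hA : A.PosSemidef) (hB : B.PosSemidef) :
    ∃ (S : Matrix n n 𝕜) (lam : n → 𝕜), IsUnit S.det ∧ A * B = S * diagonal lam * S⁻¹ := by
  set C := CFC.sqrt A
  have hCH : Cᴴ = C := (CFC.sqrt_nonneg A).posSemidef.isHermitian
  have hH : (C * B * C).IsHermitian := by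
    simpa [hCH] using (hB.mul_mul_conjTranspose_same C).isHermitian
  set μ := hH.eigenvalues
  set u := hH.eigenvectorBasis
  have hHu : ∀ i, (C * B * C) *ᵥ ⇑(u i) = (μ i : 𝕜) • ⇑(u i) := fun i => by
    rw [hH.mulVec_eigenvectorBasis, RCLike.real_smul_eq_coe_smul (K := 𝕜)]
  have hu : LinearIndependent 𝕜 fun i : {i // μ i ≠ 0} => ⇑(u i) :=
    ((u.toBasis.map (WithLp.linearEquiv 2 𝕜 (n → 𝕜))).linearIndependent).comp _
      Subtype.val_injective
  refine exists_eq_mul_diagonal_mul_inv_of_linearIndependent (A * B)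
    (v := fun i : {i // μ i ≠ 0} => C *ᵥ u i) (μ := fun i => (μ i : 𝕜)) ?_
    (fun i => RCLike.ofReal_ne_zero.mpr i.2) ?_ ?_
  · apply LinearIndependent.of_comp (C * B).mulVecLin
    have hCBv : (C * B).mulVecLin ∘ (fun i : {i // μ i ≠ 0} => C *ᵥ u i) =
        fun i : {i // μ i ≠ 0} => (μ i : 𝕜) • ⇑(u i) := by
      funext i
      rw [Function.comp_apply, mulVecLin_apply, mulVec_mulVec, hHu]
    rw [hCBv]
    exact hu.units_smul fun i => Units.mk0 (μ i : 𝕜) (RCLike.ofReal_ne_zero.mpr i.2)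
  · intro i
    have hABC : A * B * C = C * (C * B * C) := by
      rw [← CFC.sqrt_mul_sqrt_self A hA.nonneg]
      noncomm_ring
    rw [mulVec_mulVec, hABC, ← mulVec_mulVec, hHu, mulVec_smul]
  · rw [← hH.rank_eq_card_non_zero_eigs]
    exact rank_mul_le_rank_sqrt_mul_mul_sqrt hA hB

end Matrix.PosSemidef

theorem stmt_8 (N : ℕ) (A B : Matrix (Fin N) (Fin N) ℝ)
    (hA : A.PosSemidef) (hB : B.PosSemidef) :
    ∃ (S : Matrix (Fin N) (Fin N) ℝ) (lam : Fin N → ℝ),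
      IsUnit S.det ∧ A * B = S * Matrix.diagonal lam * S⁻¹ :=
  hA.exists_mul_eq_mul_diagonal_mul_inv hB
end

section
/- (Lemma C.6, spectral decomposition of the class-center covariance.) In the structured contrastive dataset, define a_1 = 1 + μ² + σ_ξ²/(mn), a_2 = φ_1² + σ_ξ²/(mn), l_1⁺ = (v_0 + μ v_2 + (σ_ξ/(mn)) Σ_{i=1}^{mn} v_{K+i}) / √a_1, and l_2⁺ = (φ_1 v_1 + (σ_ξ/(mn)) Σ_{i=1}^{mn} y_i v_{K+i}) / √a_2. Then l_1⁺ and l_2⁺ are orthonormal, M⁺ = a_1 l_1⁺ l_1⁺ᵀ + a_2 l_2⁺ l_2⁺ᵀ, and in particular M⁺ l_1⁺ = a_1 l_1⁺ and M⁺ l_2⁺ = a_2 l_2⁺. -/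
set_option maxHeartbeats 1000000

open Finset

lemma sum_split_pm {α M : Type*} [DecidableEq α] [AddCommMonoid M] (s : Finset α)
    (g : α → ℝ) (hg : ∀ i ∈ s, g i = 1 ∨ g i = -1) (f : α → M) :
    ∑ i ∈ s, f i = (∑ i ∈ s.filter (fun i => g i = 1), f i)
      + ∑ i ∈ s.filter (fun i => g i = -1), f i := by
  classical
  rw [← Finset.sum_filter_add_sum_filter_not s (fun i => g i = 1) f]
  congr 1
  apply Finset.sum_congr _ (fun _ _ => rfl)
  apply Finset.filter_congr
  intro i hi
  rcases hg i hi with h | h <;> simp [h] <;> norm_num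

lemma card_split_pm {α : Type*} [DecidableEq α] (s : Finset α)
    (g : α → ℝ) (hg : ∀ i ∈ s, g i = 1 ∨ g i = -1) :
    s.card = (s.filter (fun i => g i = 1)).card
      + (s.filter (fun i => g i = -1)).card := by
  classical
  have := sum_split_pm s g hg (fun _ => (1 : ℕ))
  simpa using this

open Matrix

theorem stmt_10
    (m K n D : ℕ)
    (hm : 1 ≤ m) (hK : 3 ≤ K) (hn : 1 ≤ n) (hdiv : 8 * (K - 2) ∣ n)
    (hD : K + 1 + m * n ≤ D)
    (φ : ℕ → ℝ) (hφ : ∀ j, 1 ≤ j → j ≤ K → 0 < φ j)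
    (μ σξ : ℝ) (hσ : 0 < σξ)
    (v : ℕ → Fin D → ℝ)
    (hortho : ∀ i j, i ≤ K + m * n → j ≤ K + m * n →
      (∑ t, v i t * v j t) = if i = j then (1 : ℝ) else 0)
    (y ysub ρ : Fin (m * n) → ℝ) (κ : Fin (m * n) → ℕ)
    (hy : ∀ i, y i = 1 ∨ y i = -1)
    (hysub : ∀ i, ysub i = 1 ∨ ysub i = -1)
    (hρ : ∀ i, ρ i = 1 ∨ ρ i = -1)
    (hκ : ∀ i, 3 ≤ κ i ∧ κ i ≤ K)
    (hblock : ∀ i j : Fin (m * n), i.1 / m = j.1 / m →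
      y i = y j ∧ ysub i = ysub j ∧ κ i = κ j ∧ ρ i = ρ j)
    (hbal : ∀ (a b r : ℝ) (c : ℕ), (a = 1 ∨ a = -1) → (b = 1 ∨ b = -1) →
      (r = 1 ∨ r = -1) → 3 ≤ c → c ≤ K →
      Set.ncard {i : Fin (m * n) | y i = a ∧ ysub i = b ∧ κ i = c ∧ ρ i = r}
        = m * n / (8 * (K - 2)))
    (x : Fin (m * n) → Fin D → ℝ)
    (hx : ∀ i, x i = fun t => v 0 t + y i * φ 1 * v 1 t + (ysub i * φ 2 + μ) * v 2 t
      + ρ i * φ (κ i) * v (κ i) t + σξ * v (K + 1 + i.1) t)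
    (M Mp : Matrix (Fin D) (Fin D) ℝ)
    (hM : M = ((m * n : ℝ))⁻¹ • ∑ i, Matrix.vecMulVec (x i) (x i))
    (xbar : ℝ → Fin D → ℝ)
    (hxbar : ∀ ε, xbar ε = (2 / (m * n : ℝ)) •
      ∑ i, Set.indicator {j : Fin (m * n) | y j = ε} x i)
    (hMp : Mp = (2 : ℝ)⁻¹ • (Matrix.vecMulVec (xbar 1) (xbar 1)
      + Matrix.vecMulVec (xbar (-1)) (xbar (-1))))
    (a1 a2 : ℝ) (l1 l2 : Fin D → ℝ)
    (ha1 : a1 = 1 + μ ^ 2 + σξ ^ 2 / (m * n : ℝ))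
    (ha2 : a2 = φ 1 ^ 2 + σξ ^ 2 / (m * n : ℝ))
    (hl1 : l1 = fun t => (v 0 t + μ * v 2 t
      + (σξ / (m * n : ℝ)) * ∑ i : Fin (m * n), v (K + 1 + i.1) t) / Real.sqrt a1)
    (hl2 : l2 = fun t => (φ 1 * v 1 t
      + (σξ / (m * n : ℝ)) * ∑ i : Fin (m * n), y i * v (K + 1 + i.1) t) / Real.sqrt a2) :
    (∑ t, l1 t * l1 t) = 1 ∧ (∑ t, l2 t * l2 t) = 1 ∧ (∑ t, l1 t * l2 t) = 0 ∧
    Mp = a1 • Matrix.vecMulVec l1 l1 + a2 • Matrix.vecMulVec l2 l2 ∧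
    Mp.mulVec l1 = a1 • l1 ∧ Mp.mulVec l2 = a2 • l2 := by
  classical
  have hmn0 : 0 < m * n := Nat.mul_pos (by omega) (by omega)
  set N := m * n / (8 * (K - 2)) with hN
  have hcard4 : ∀ (a b r : ℝ) (c : ℕ), (a = 1 ∨ a = -1) → (b = 1 ∨ b = -1) →
      (r = 1 ∨ r = -1) → 3 ≤ c → c ≤ K →
      (Finset.univ.filter (fun i => y i = a ∧ ysub i = b ∧ κ i = c ∧ ρ i = r)).card = N := by
    intro a b r c ha hb hr h3 hKc
    have h := hbal a b r c ha hb hr h3 hKc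
    rwa [show {i : Fin (m*n) | y i = a ∧ ysub i = b ∧ κ i = c ∧ ρ i = r}
        = ↑(Finset.univ.filter (fun i => y i = a ∧ ysub i = b ∧ κ i = c ∧ ρ i = r)) from by
      ext i; simp, Set.ncard_coe_finset] at h
  -- card with (y, ysub, κ) fixed
  have hcard3 : ∀ (a b : ℝ) (c : ℕ), (a = 1 ∨ a = -1) → (b = 1 ∨ b = -1) →
      3 ≤ c → c ≤ K →
      (Finset.univ.filter (fun i => y i = a ∧ ysub i = b ∧ κ i = c)).card = 2 * N := by
    intro a b c ha hb h3 hKc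
    rw [card_split_pm _ ρ (fun i _ => hρ i), Finset.filter_filter, Finset.filter_filter]
    have e1 : Finset.univ.filter (fun i => (y i = a ∧ ysub i = b ∧ κ i = c) ∧ ρ i = 1)
        = Finset.univ.filter (fun i => y i = a ∧ ysub i = b ∧ κ i = c ∧ ρ i = 1) :=
      Finset.filter_congr (fun i _ => by tauto)
    have e2 : Finset.univ.filter (fun i => (y i = a ∧ ysub i = b ∧ κ i = c) ∧ ρ i = -1)
        = Finset.univ.filter (fun i => y i = a ∧ ysub i = b ∧ κ i = c ∧ ρ i = -1) :=
      Finset.filter_congr (fun i _ => by tauto)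
    rw [e1, e2, hcard4 a b 1 c ha hb (Or.inl rfl) h3 hKc,
      hcard4 a b (-1) c ha hb (Or.inr rfl) h3 hKc]
    omega
  -- card with (y, κ, ρ) fixed
  have hcard3r : ∀ (a r : ℝ) (c : ℕ), (a = 1 ∨ a = -1) → (r = 1 ∨ r = -1) →
      3 ≤ c → c ≤ K →
      (Finset.univ.filter (fun i => y i = a ∧ κ i = c ∧ ρ i = r)).card = 2 * N := by
    intro a r c ha hr h3 hKc
    rw [card_split_pm _ ysub (fun i _ => hysub i), Finset.filter_filter, Finset.filter_filter]
    have e1 : Finset.univ.filter (fun i => (y i = a ∧ κ i = c ∧ ρ i = r) ∧ ysub i = 1)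
        = Finset.univ.filter (fun i => y i = a ∧ ysub i = 1 ∧ κ i = c ∧ ρ i = r) :=
      Finset.filter_congr (fun i _ => by tauto)
    have e2 : Finset.univ.filter (fun i => (y i = a ∧ κ i = c ∧ ρ i = r) ∧ ysub i = -1)
        = Finset.univ.filter (fun i => y i = a ∧ ysub i = -1 ∧ κ i = c ∧ ρ i = r) :=
      Finset.filter_congr (fun i _ => by tauto)
    rw [e1, e2, hcard4 a 1 r c ha (Or.inl rfl) hr h3 hKc,
      hcard4 a (-1) r c ha (Or.inr rfl) hr h3 hKc]
    omega
  -- card with (y, κ) fixed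
  have hcard2 : ∀ (a : ℝ) (c : ℕ), (a = 1 ∨ a = -1) → 3 ≤ c → c ≤ K →
      (Finset.univ.filter (fun i => y i = a ∧ κ i = c)).card = 4 * N := by
    intro a c ha h3 hKc
    rw [card_split_pm _ ρ (fun i _ => hρ i), Finset.filter_filter, Finset.filter_filter]
    have e1 : Finset.univ.filter (fun i => (y i = a ∧ κ i = c) ∧ ρ i = 1)
        = Finset.univ.filter (fun i => y i = a ∧ κ i = c ∧ ρ i = 1) :=
      Finset.filter_congr (fun i _ => by tauto)
    have e2 : Finset.univ.filter (fun i => (y i = a ∧ κ i = c) ∧ ρ i = -1)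
        = Finset.univ.filter (fun i => y i = a ∧ κ i = c ∧ ρ i = -1) :=
      Finset.filter_congr (fun i _ => by tauto)
    rw [e1, e2, hcard3r a 1 c ha (Or.inl rfl) h3 hKc, hcard3r a (-1) c ha (Or.inr rfl) h3 hKc]
    omega
  -- card with (y, ysub) fixed
  have hcard2b : ∀ (a b : ℝ), (a = 1 ∨ a = -1) → (b = 1 ∨ b = -1) →
      (Finset.univ.filter (fun i => y i = a ∧ ysub i = b)).card = (K - 2) * (2 * N) := by
    intro a b ha hb
    rw [Finset.card_eq_sum_card_fiberwise (f := κ) (t := Finset.Icc 3 K)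
      (fun i _ => Finset.mem_Icc.mpr ⟨(hκ i).1, (hκ i).2⟩)]
    rw [Finset.sum_congr rfl (fun c hc => by
      rw [Finset.filter_filter,
        show Finset.univ.filter (fun i => (y i = a ∧ ysub i = b) ∧ κ i = c)
          = Finset.univ.filter (fun i => y i = a ∧ ysub i = b ∧ κ i = c) from
          Finset.filter_congr (fun i _ => by tauto),
        hcard3 a b c ha hb (Finset.mem_Icc.mp hc).1 (Finset.mem_Icc.mp hc).2])]
    rw [Finset.sum_const, Nat.card_Icc, smul_eq_mul, show K + 1 - 3 = K - 2 from by omega]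
  -- card of a class
  have hcardS : ∀ (a : ℝ), (a = 1 ∨ a = -1) →
      (Finset.univ.filter (fun i => y i = a)).card = (K - 2) * (4 * N) := by
    intro a ha
    rw [Finset.card_eq_sum_card_fiberwise (f := κ) (t := Finset.Icc 3 K)
      (fun i _ => Finset.mem_Icc.mpr ⟨(hκ i).1, (hκ i).2⟩)]
    rw [Finset.sum_congr rfl (fun c hc => by
      rw [Finset.filter_filter,
        hcard2 a c ha (Finset.mem_Icc.mp hc).1 (Finset.mem_Icc.mp hc).2])]
    rw [Finset.sum_const, Nat.card_Icc, smul_eq_mul, show K + 1 - 3 = K - 2 from by omega]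
  have hcardhalf : ∀ (a : ℝ), (a = 1 ∨ a = -1) →
      2 * (Finset.univ.filter (fun i => y i = a)).card = m * n := by
    have htot : m * n = (Finset.univ.filter (fun i => y i = (1:ℝ))).card
        + (Finset.univ.filter (fun i => y i = (-1:ℝ))).card := by
      have := card_split_pm Finset.univ y (fun i _ => hy i)
      simpa [Finset.card_univ] using this
    have h1 := hcardS 1 (Or.inl rfl)
    have h2 := hcardS (-1) (Or.inr rfl)
    intro a ha
    rcases ha with h | h <;> subst h <;> omega
  have hsumysub : ∀ (a : ℝ), (a = 1 ∨ a = -1) →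
      ∑ i ∈ Finset.univ.filter (fun i => y i = a), ysub i = 0 := by
    intro a ha
    rw [sum_split_pm _ ysub (fun i _ => hysub i), Finset.filter_filter, Finset.filter_filter]
    have e1 : ∑ i ∈ Finset.univ.filter (fun i => y i = a ∧ ysub i = 1), ysub i
        = ((Finset.univ.filter (fun i => y i = a ∧ ysub i = 1)).card : ℝ) := by
      rw [Finset.sum_congr rfl (fun i hi => (Finset.mem_filter.mp hi).2.2), Finset.sum_const,
        nsmul_eq_mul, mul_one]
    have e2 : ∑ i ∈ Finset.univ.filter (fun i => y i = a ∧ ysub i = -1), ysub i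
        = -((Finset.univ.filter (fun i => y i = a ∧ ysub i = -1)).card : ℝ) := by
      rw [Finset.sum_congr rfl (fun i hi => (Finset.mem_filter.mp hi).2.2), Finset.sum_const,
        nsmul_eq_mul]
      ring
    rw [e1, e2, hcard2b a 1 ha (Or.inl rfl), hcard2b a (-1) ha (Or.inr rfl)]
    ring
  have hsumrho : ∀ (a : ℝ) (c : ℕ), (a = 1 ∨ a = -1) → 3 ≤ c → c ≤ K →
      ∑ i ∈ Finset.univ.filter (fun i => y i = a ∧ κ i = c), ρ i = 0 := by
    intro a c ha h3 hKc
    rw [sum_split_pm _ ρ (fun i _ => hρ i), Finset.filter_filter, Finset.filter_filter]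
    have e0 : Finset.univ.filter (fun i => (y i = a ∧ κ i = c) ∧ ρ i = 1)
        = Finset.univ.filter (fun i => y i = a ∧ κ i = c ∧ ρ i = 1) :=
      Finset.filter_congr (fun i _ => by tauto)
    have e0' : Finset.univ.filter (fun i => (y i = a ∧ κ i = c) ∧ ρ i = -1)
        = Finset.univ.filter (fun i => y i = a ∧ κ i = c ∧ ρ i = -1) :=
      Finset.filter_congr (fun i _ => by tauto)
    rw [e0, e0']
    have e1 : ∑ i ∈ Finset.univ.filter (fun i => y i = a ∧ κ i = c ∧ ρ i = 1), ρ i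
        = ((Finset.univ.filter (fun i => y i = a ∧ κ i = c ∧ ρ i = 1)).card : ℝ) := by
      rw [Finset.sum_congr rfl (fun i hi => (Finset.mem_filter.mp hi).2.2.2), Finset.sum_const,
        nsmul_eq_mul, mul_one]
    have e2 : ∑ i ∈ Finset.univ.filter (fun i => y i = a ∧ κ i = c ∧ ρ i = -1), ρ i
        = -((Finset.univ.filter (fun i => y i = a ∧ κ i = c ∧ ρ i = -1)).card : ℝ) := by
      rw [Finset.sum_congr rfl (fun i hi => (Finset.mem_filter.mp hi).2.2.2), Finset.sum_const,
        nsmul_eq_mul]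
      ring
    rw [e1, e2, hcard3r a 1 c ha (Or.inl rfl) h3 hKc, hcard3r a (-1) c ha (Or.inr rfl) h3 hKc]
    ring
  have hsumrhov : ∀ (a : ℝ), (a = 1 ∨ a = -1) → ∀ t : Fin D,
      ∑ i ∈ Finset.univ.filter (fun i => y i = a), ρ i * φ (κ i) * v (κ i) t = 0 := by
    intro a ha t
    rw [← Finset.sum_fiberwise_of_maps_to (g := κ) (t := Finset.Icc 3 K)
      (fun i _ => Finset.mem_Icc.mpr ⟨(hκ i).1, (hκ i).2⟩)]
    rw [Finset.sum_congr rfl (fun c hc => by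
      rw [Finset.filter_filter,
        Finset.sum_congr rfl (fun i hi =>
          show ρ i * φ (κ i) * v (κ i) t = ρ i * (φ c * v c t) from by
            rw [(Finset.mem_filter.mp hi).2.2]; ring),
        ← Finset.sum_mul, hsumrho a c ha (Finset.mem_Icc.mp hc).1 (Finset.mem_Icc.mp hc).2,
        zero_mul])]
    exact Finset.sum_const_zero
  have hsumyall : ∑ i : Fin (m * n), y i = 0 := by
    rw [sum_split_pm Finset.univ y (fun i _ => hy i)]
    have e1 : ∑ i ∈ Finset.univ.filter (fun i => y i = (1:ℝ)), y i
        = ((Finset.univ.filter (fun i => y i = (1:ℝ))).card : ℝ) := by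
      rw [Finset.sum_congr rfl (fun i hi => (Finset.mem_filter.mp hi).2), Finset.sum_const,
        nsmul_eq_mul, mul_one]
    have e2 : ∑ i ∈ Finset.univ.filter (fun i => y i = (-1:ℝ)), y i
        = -((Finset.univ.filter (fun i => y i = (-1:ℝ))).card : ℝ) := by
      rw [Finset.sum_congr rfl (fun i hi => (Finset.mem_filter.mp hi).2), Finset.sum_const,
        nsmul_eq_mul]
      ring
    rw [e1, e2, hcardS 1 (Or.inl rfl), hcardS (-1) (Or.inr rfl)]
    ring
  have hmnR : (0:ℝ) < (m:ℝ) * (n:ℝ) := by positivity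
  have hcardR : ∀ (a : ℝ), (a = 1 ∨ a = -1) →
      ((Finset.univ.filter (fun i => y i = a)).card : ℝ) = (m:ℝ) * (n:ℝ) / 2 := by
    intro a ha
    have h := hcardhalf a ha
    have : (2:ℝ) * ((Finset.univ.filter (fun i => y i = a)).card : ℝ) = (m:ℝ) * (n:ℝ) := by
      exact_mod_cast congrArg (Nat.cast : ℕ → ℝ) h
    linarith
  have hhalf : ∀ (a : ℝ), (a = 1 ∨ a = -1) → ∀ t : Fin D,
      ∑ i ∈ Finset.univ.filter (fun i => y i = a), v (K + 1 + i.1) t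
      = ((∑ i : Fin (m * n), v (K + 1 + i.1) t)
        + a * ∑ i : Fin (m * n), y i * v (K + 1 + i.1) t) / 2 := by
    intro a ha t
    rw [eq_div_iff (two_ne_zero)]
    have expand : (∑ i : Fin (m * n), v (K + 1 + i.1) t)
        + a * ∑ i : Fin (m * n), y i * v (K + 1 + i.1) t
        = ∑ i : Fin (m * n), (1 + a * y i) * v (K + 1 + i.1) t := by
      rw [Finset.mul_sum, ← Finset.sum_add_distrib]
      exact Finset.sum_congr rfl (fun i _ => by ring)
    rw [expand, ← Finset.sum_filter_add_sum_filter_not Finset.univ (fun i => y i = a)]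
    have h2 : ∑ i ∈ Finset.univ.filter (fun i => ¬ y i = a), (1 + a * y i) * v (K + 1 + i.1) t
        = 0 :=
      Finset.sum_eq_zero (fun i hi => by
        have hne := (Finset.mem_filter.mp hi).2
        rcases hy i with h | h <;> rcases ha with h' | h'
        · exact absurd (h.trans h'.symm) hne
        · rw [h, h']; ring
        · rw [h, h']; ring
        · exact absurd (h.trans h'.symm) hne)
    rw [h2, add_zero, Finset.sum_mul]
    exact Finset.sum_congr rfl (fun i hi => by
      have h := (Finset.mem_filter.mp hi).2
      rw [h]
      rcases ha with h' | h' <;> rw [h'] <;> ring)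
  have hxbarval : ∀ (a : ℝ), (a = 1 ∨ a = -1) → ∀ t : Fin D,
      xbar a t = (v 0 t + μ * v 2 t
          + (σξ / ((m:ℝ) * (n:ℝ))) * ∑ i : Fin (m * n), v (K + 1 + i.1) t)
        + a * (φ 1 * v 1 t
          + (σξ / ((m:ℝ) * (n:ℝ))) * ∑ i : Fin (m * n), y i * v (K + 1 + i.1) t) := by
    intro a ha t
    have h0 : xbar a t = (2 / ((m:ℝ) * (n:ℝ)))
        * ∑ i ∈ Finset.univ.filter (fun i => y i = a), x i t := by
      rw [hxbar a]
      simp only [Pi.smul_apply, Finset.sum_apply, smul_eq_mul, Set.indicator_apply,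
        Set.mem_setOf_eq, apply_ite (fun f : Fin D → ℝ => f t), Pi.zero_apply]
      rw [Finset.sum_filter]
    rw [h0, Finset.sum_congr rfl (fun i hi =>
      show x i t = v 0 t + a * φ 1 * v 1 t + ysub i * (φ 2 * v 2 t) + μ * v 2 t
          + ρ i * φ (κ i) * v (κ i) t + σξ * v (K + 1 + i.1) t from by
        rw [hx i, (Finset.mem_filter.mp hi).2]; ring)]
    simp only [Finset.sum_add_distrib]
    rw [Finset.sum_const, Finset.sum_const, Finset.sum_const, ← Finset.sum_mul,
      ← Finset.mul_sum, hsumrhov a ha t, hsumysub a ha, hhalf a ha t]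
    rw [nsmul_eq_mul, nsmul_eq_mul, nsmul_eq_mul, hcardR a ha]
    field_simp
    ring
  -- inner product facts
  have hKi : ∀ i : Fin (m * n), K + 1 + i.1 ≤ K + m * n := fun i => by
    have := i.isLt; omega
  have hvS : ∀ a : ℕ, a ≤ K →
      ∑ t, v a t * (∑ i : Fin (m * n), v (K + 1 + i.1) t) = 0 := by
    intro a haK
    calc ∑ t, v a t * (∑ i : Fin (m * n), v (K + 1 + i.1) t)
        = ∑ t, ∑ i : Fin (m * n), v a t * v (K + 1 + i.1) t :=
          Finset.sum_congr rfl (fun t _ => Finset.mul_sum _ _ _)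
      _ = ∑ i : Fin (m * n), ∑ t, v a t * v (K + 1 + i.1) t := Finset.sum_comm
      _ = 0 := Finset.sum_eq_zero (fun i _ => by
          rw [hortho a (K + 1 + i.1) (by omega) (hKi i), if_neg (by omega)])
  have hvSy : ∀ a : ℕ, a ≤ K →
      ∑ t, v a t * (∑ i : Fin (m * n), y i * v (K + 1 + i.1) t) = 0 := by
    intro a haK
    calc ∑ t, v a t * (∑ i : Fin (m * n), y i * v (K + 1 + i.1) t)
        = ∑ t, ∑ i : Fin (m * n), v a t * (y i * v (K + 1 + i.1) t) :=
          Finset.sum_congr rfl (fun t _ => Finset.mul_sum _ _ _)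
      _ = ∑ i : Fin (m * n), ∑ t, v a t * (y i * v (K + 1 + i.1) t) := Finset.sum_comm
      _ = 0 := Finset.sum_eq_zero (fun i _ => by
          have e : y i * ∑ t, v a t * v (K + 1 + i.1) t
              = ∑ t, v a t * (y i * v (K + 1 + i.1) t) :=
            (Finset.mul_sum _ _ _).trans
              (Finset.sum_congr rfl (fun t _ => by ring))
          rw [← e, hortho a (K + 1 + i.1) (by omega) (hKi i), if_neg (by omega), mul_zero])
  have hSS : ∑ t, (∑ i : Fin (m * n), v (K + 1 + i.1) t)
      * (∑ i : Fin (m * n), v (K + 1 + i.1) t) = (m:ℝ) * (n:ℝ) := by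
    calc ∑ t, (∑ i : Fin (m * n), v (K + 1 + i.1) t)
          * (∑ i : Fin (m * n), v (K + 1 + i.1) t)
        = ∑ t, ∑ i : Fin (m * n), ∑ j : Fin (m * n),
            v (K + 1 + i.1) t * v (K + 1 + j.1) t :=
          Finset.sum_congr rfl (fun t _ => Finset.sum_mul_sum _ _ _ _)
      _ = ∑ i : Fin (m * n), ∑ t, ∑ j : Fin (m * n),
            v (K + 1 + i.1) t * v (K + 1 + j.1) t := Finset.sum_comm
      _ = ∑ i : Fin (m * n), ∑ j : Fin (m * n), ∑ t,
            v (K + 1 + i.1) t * v (K + 1 + j.1) t :=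
          Finset.sum_congr rfl (fun i _ => Finset.sum_comm)
      _ = ∑ i : Fin (m * n), (1:ℝ) := Finset.sum_congr rfl (fun i _ => by
          rw [Finset.sum_congr rfl (fun j _ =>
            hortho (K + 1 + i.1) (K + 1 + j.1) (hKi i) (hKi j)),
            Finset.sum_congr rfl (fun j _ => if_congr
              (by constructor <;> intro h <;> [exact (Fin.ext (by omega) : i = j); omega])
              rfl rfl),
            Finset.sum_ite_eq Finset.univ i (fun _ => (1:ℝ)), if_pos (Finset.mem_univ i)])
      _ = (m:ℝ) * (n:ℝ) := by
          rw [Finset.sum_const, Finset.card_univ, Fintype.card_fin, nsmul_eq_mul, mul_one]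
          push_cast; ring
  have hSySy : ∑ t, (∑ i : Fin (m * n), y i * v (K + 1 + i.1) t)
      * (∑ i : Fin (m * n), y i * v (K + 1 + i.1) t) = (m:ℝ) * (n:ℝ) := by
    calc ∑ t, (∑ i : Fin (m * n), y i * v (K + 1 + i.1) t)
          * (∑ i : Fin (m * n), y i * v (K + 1 + i.1) t)
        = ∑ t, ∑ i : Fin (m * n), ∑ j : Fin (m * n),
            (y i * y j) * (v (K + 1 + i.1) t * v (K + 1 + j.1) t) := by
          refine Finset.sum_congr rfl (fun t _ => ?_)
          rw [Finset.sum_mul_sum]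
          exact Finset.sum_congr rfl (fun i _ => Finset.sum_congr rfl (fun j _ => by ring))
      _ = ∑ i : Fin (m * n), ∑ t, ∑ j : Fin (m * n),
            (y i * y j) * (v (K + 1 + i.1) t * v (K + 1 + j.1) t) := Finset.sum_comm
      _ = ∑ i : Fin (m * n), ∑ j : Fin (m * n),
            (y i * y j) * ∑ t, v (K + 1 + i.1) t * v (K + 1 + j.1) t := by
          refine Finset.sum_congr rfl (fun i _ => ?_)
          rw [Finset.sum_comm]
          exact Finset.sum_congr rfl (fun j _ => (Finset.mul_sum _ _ _).symm)
      _ = ∑ i : Fin (m * n), (1:ℝ) := Finset.sum_congr rfl (fun i _ => by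
          rw [Finset.sum_congr rfl (fun j _ => by
            rw [hortho (K + 1 + i.1) (K + 1 + j.1) (hKi i) (hKi j),
              if_congr (show K + 1 + i.1 = K + 1 + j.1 ↔ i = j from by
                constructor <;> intro h <;> [exact (Fin.ext (by omega) : i = j); omega])
                rfl rfl, mul_ite, mul_one, mul_zero]),
            Finset.sum_ite_eq Finset.univ i (fun j => y i * y j), if_pos (Finset.mem_univ i)]
          rcases hy i with h | h <;> rw [h] <;> norm_num)
      _ = (m:ℝ) * (n:ℝ) := by
          rw [Finset.sum_const, Finset.card_univ, Fintype.card_fin, nsmul_eq_mul, mul_one]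
          push_cast; ring
  have hSSy : ∑ t, (∑ i : Fin (m * n), v (K + 1 + i.1) t)
      * (∑ i : Fin (m * n), y i * v (K + 1 + i.1) t) = 0 := by
    calc ∑ t, (∑ i : Fin (m * n), v (K + 1 + i.1) t)
          * (∑ i : Fin (m * n), y i * v (K + 1 + i.1) t)
        = ∑ t, ∑ i : Fin (m * n), ∑ j : Fin (m * n),
            y j * (v (K + 1 + i.1) t * v (K + 1 + j.1) t) := by
          refine Finset.sum_congr rfl (fun t _ => ?_)
          rw [Finset.sum_mul_sum]
          exact Finset.sum_congr rfl (fun i _ => Finset.sum_congr rfl (fun j _ => by ring))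
      _ = ∑ i : Fin (m * n), ∑ t, ∑ j : Fin (m * n),
            y j * (v (K + 1 + i.1) t * v (K + 1 + j.1) t) := Finset.sum_comm
      _ = ∑ i : Fin (m * n), ∑ j : Fin (m * n),
            y j * ∑ t, v (K + 1 + i.1) t * v (K + 1 + j.1) t := by
          refine Finset.sum_congr rfl (fun i _ => ?_)
          rw [Finset.sum_comm]
          exact Finset.sum_congr rfl (fun j _ => (Finset.mul_sum _ _ _).symm)
      _ = ∑ i : Fin (m * n), y i := Finset.sum_congr rfl (fun i _ => by
          rw [Finset.sum_congr rfl (fun j _ => by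
            rw [hortho (K + 1 + i.1) (K + 1 + j.1) (hKi i) (hKi j),
              if_congr (show K + 1 + i.1 = K + 1 + j.1 ↔ i = j from by
                constructor <;> intro h <;> [exact (Fin.ext (by omega) : i = j); omega])
                rfl rfl, mul_ite, mul_one, mul_zero]),
            Finset.sum_ite_eq Finset.univ i (fun j => y j), if_pos (Finset.mem_univ i)])
      _ = 0 := hsumyall
  have hne : (m:ℝ) * (n:ℝ) ≠ 0 := ne_of_gt hmnR
  have ha1pos : 0 < a1 := by
    rw [ha1]
    have h1 : (0:ℝ) ≤ σξ^2 / ((m:ℝ) * (n:ℝ)) := div_nonneg (sq_nonneg _) (le_of_lt hmnR)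
    nlinarith [sq_nonneg μ]
  have hφ1 : 0 < φ 1 := hφ 1 le_rfl (by omega)
  have ha2pos : 0 < a2 := by
    rw [ha2]
    have h1 : (0:ℝ) ≤ σξ^2 / ((m:ℝ) * (n:ℝ)) := div_nonneg (sq_nonneg _) (le_of_lt hmnR)
    nlinarith
  have huu : ∑ t, (v 0 t + μ * v 2 t
        + σξ / ((m:ℝ) * (n:ℝ)) * ∑ i : Fin (m * n), v (K + 1 + i.1) t)
      * (v 0 t + μ * v 2 t
        + σξ / ((m:ℝ) * (n:ℝ)) * ∑ i : Fin (m * n), v (K + 1 + i.1) t) = a1 := by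
    rw [Finset.sum_congr rfl (fun t _ =>
      show _ = v 0 t * v 0 t + μ^2 * (v 2 t * v 2 t)
        + (σξ / ((m:ℝ) * (n:ℝ)))^2 * ((∑ i : Fin (m * n), v (K + 1 + i.1) t)
            * (∑ i : Fin (m * n), v (K + 1 + i.1) t))
        + (2*μ) * (v 0 t * v 2 t)
        + (2*(σξ / ((m:ℝ) * (n:ℝ)))) * (v 0 t * ∑ i : Fin (m * n), v (K + 1 + i.1) t)
        + (2*(μ*(σξ / ((m:ℝ) * (n:ℝ))))) * (v 2 t * ∑ i : Fin (m * n), v (K + 1 + i.1) t)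
        from by ring)]
    simp only [Finset.sum_add_distrib, ← Finset.mul_sum]
    rw [hortho 0 0 (by omega) (by omega), hortho 2 2 (by omega) (by omega),
      hortho 0 2 (by omega) (by omega), hSS, hvS 0 (by omega), hvS 2 (by omega)]
    norm_num
    rw [ha1]
    field_simp
  have hww : ∑ t, (φ 1 * v 1 t
        + σξ / ((m:ℝ) * (n:ℝ)) * ∑ i : Fin (m * n), y i * v (K + 1 + i.1) t)
      * (φ 1 * v 1 t
        + σξ / ((m:ℝ) * (n:ℝ)) * ∑ i : Fin (m * n), y i * v (K + 1 + i.1) t) = a2 := by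
    rw [Finset.sum_congr rfl (fun t _ =>
      show _ = (φ 1)^2 * (v 1 t * v 1 t)
        + (σξ / ((m:ℝ) * (n:ℝ)))^2 * ((∑ i : Fin (m * n), y i * v (K + 1 + i.1) t)
            * (∑ i : Fin (m * n), y i * v (K + 1 + i.1) t))
        + (2*(φ 1*(σξ / ((m:ℝ) * (n:ℝ)))))
            * (v 1 t * ∑ i : Fin (m * n), y i * v (K + 1 + i.1) t)
        from by ring)]
    simp only [Finset.sum_add_distrib, ← Finset.mul_sum]
    rw [hortho 1 1 (by omega) (by omega), hSySy, hvSy 1 (by omega)]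
    norm_num
    rw [ha2]
    field_simp
  have huw : ∑ t, (v 0 t + μ * v 2 t
        + σξ / ((m:ℝ) * (n:ℝ)) * ∑ i : Fin (m * n), v (K + 1 + i.1) t)
      * (φ 1 * v 1 t
        + σξ / ((m:ℝ) * (n:ℝ)) * ∑ i : Fin (m * n), y i * v (K + 1 + i.1) t) = 0 := by
    rw [Finset.sum_congr rfl (fun t _ =>
      show _ = φ 1 * (v 0 t * v 1 t)
        + (σξ / ((m:ℝ) * (n:ℝ))) * (v 0 t * ∑ i : Fin (m * n), y i * v (K + 1 + i.1) t)
        + (μ * φ 1) * (v 2 t * v 1 t)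
        + (μ * (σξ / ((m:ℝ) * (n:ℝ))))
            * (v 2 t * ∑ i : Fin (m * n), y i * v (K + 1 + i.1) t)
        + (φ 1 * (σξ / ((m:ℝ) * (n:ℝ))))
            * (v 1 t * ∑ i : Fin (m * n), v (K + 1 + i.1) t)
        + ((σξ / ((m:ℝ) * (n:ℝ))) * (σξ / ((m:ℝ) * (n:ℝ))))
            * ((∑ i : Fin (m * n), v (K + 1 + i.1) t)
              * (∑ i : Fin (m * n), y i * v (K + 1 + i.1) t))
        from by ring)]
    simp only [Finset.sum_add_distrib, ← Finset.mul_sum]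
    rw [hortho 0 1 (by omega) (by omega), hortho 2 1 (by omega) (by omega),
      hvSy 0 (by omega), hvSy 2 (by omega), hvS 1 (by omega), hSSy]
    norm_num
  have hs1 : Real.sqrt a1 * Real.sqrt a1 = a1 := Real.mul_self_sqrt ha1pos.le
  have hs2 : Real.sqrt a2 * Real.sqrt a2 = a2 := Real.mul_self_sqrt ha2pos.le
  have hs1ne : Real.sqrt a1 ≠ 0 := ne_of_gt (Real.sqrt_pos.mpr ha1pos)
  have hs2ne : Real.sqrt a2 ≠ 0 := ne_of_gt (Real.sqrt_pos.mpr ha2pos)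
  have g1 : ∑ t, l1 t * l1 t = 1 := by
    simp only [hl1, div_mul_div_comm]
    rw [← Finset.sum_div, huu, hs1, div_self ha1pos.ne']
  have g2 : ∑ t, l2 t * l2 t = 1 := by
    simp only [hl2, div_mul_div_comm]
    rw [← Finset.sum_div, hww, hs2, div_self ha2pos.ne']
  have g3 : ∑ t, l1 t * l2 t = 0 := by
    simp only [hl1, hl2, div_mul_div_comm]
    rw [← Finset.sum_div, huw, zero_div]
  have hul : ∀ t, v 0 t + μ * v 2 t
      + σξ / ((m:ℝ) * (n:ℝ)) * ∑ i : Fin (m * n), v (K + 1 + i.1) t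
      = Real.sqrt a1 * l1 t := by
    intro t
    rw [hl1]
    field_simp
  have hwl : ∀ t, φ 1 * v 1 t
      + σξ / ((m:ℝ) * (n:ℝ)) * ∑ i : Fin (m * n), y i * v (K + 1 + i.1) t
      = Real.sqrt a2 * l2 t := by
    intro t
    rw [hl2]
    field_simp
  have g4 : Mp = a1 • Matrix.vecMulVec l1 l1 + a2 • Matrix.vecMulVec l2 l2 := by
    rw [hMp]
    ext t s
    simp only [Matrix.smul_apply, Matrix.add_apply, Matrix.vecMulVec_apply, smul_eq_mul]
    rw [hxbarval 1 (Or.inl rfl) t, hxbarval 1 (Or.inl rfl) s,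
      hxbarval (-1) (Or.inr rfl) t, hxbarval (-1) (Or.inr rfl) s,
      hul t, hul s, hwl t, hwl s]
    linear_combination (2:ℝ)⁻¹ * ((l1 t * l1 s) * 2 * hs1 + (l2 t * l2 s) * 2 * hs2)
  have g5 : Mp.mulVec l1 = a1 • l1 := by
    rw [g4]
    funext t
    simp only [Matrix.mulVec, dotProduct, Matrix.add_apply, Matrix.smul_apply,
      Matrix.vecMulVec_apply, smul_eq_mul, Pi.smul_apply]
    rw [Finset.sum_congr rfl (fun s _ =>
      show (a1 * (l1 t * l1 s) + a2 * (l2 t * l2 s)) * l1 s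
        = a1 * l1 t * (l1 s * l1 s) + a2 * l2 t * (l1 s * l2 s) from by ring),
      Finset.sum_add_distrib, ← Finset.mul_sum, ← Finset.mul_sum, g1, g3, mul_one, mul_zero,
      add_zero]
  have g6 : Mp.mulVec l2 = a2 • l2 := by
    rw [g4]
    funext t
    simp only [Matrix.mulVec, dotProduct, Matrix.add_apply, Matrix.smul_apply,
      Matrix.vecMulVec_apply, smul_eq_mul, Pi.smul_apply]
    rw [Finset.sum_congr rfl (fun s _ =>
      show (a1 * (l1 t * l1 s) + a2 * (l2 t * l2 s)) * l2 s
        = a1 * l1 t * (l1 s * l2 s) + a2 * l2 t * (l2 s * l2 s) from by ring),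
      Finset.sum_add_distrib, ← Finset.mul_sum, ← Finset.mul_sum, g3, g2, mul_one, mul_zero,
      zero_add]
  exact ⟨g1, g2, g3, g4, g5, g6⟩
end

section
/- (Corollary C.2, kernel alignment of the subclass feature.) In the structured contrastive dataset with μ = 0, the orthogonal projection of v_2 onto the kernel of the symmetric matrix M has Euclidean norm exactly σ_ξ / √(mn φ_2² + σ_ξ²). -/
open Matrix

lemma bal_sum_aux {mn K : ℕ}
    (y ysub ρ : Fin mn → ℝ) (κ : Fin mn → ℕ)
    (hy : ∀ i, y i = 1 ∨ y i = -1) (hysub : ∀ i, ysub i = 1 ∨ ysub i = -1)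
    (hρ : ∀ i, ρ i = 1 ∨ ρ i = -1) (hκ : ∀ i, 3 ≤ κ i ∧ κ i ≤ K)
    (N : ℕ)
    (hbal : ∀ (a b r : ℝ) (c : ℕ), (a = 1 ∨ a = -1) → (b = 1 ∨ b = -1) →
      (r = 1 ∨ r = -1) → 3 ≤ c → c ≤ K →
      Set.ncard {i : Fin mn | y i = a ∧ ysub i = b ∧ κ i = c ∧ ρ i = r} = N)
    (F : ℝ → ℝ → ℕ → ℝ → ℝ) :
    ∑ i, F (y i) (ysub i) (κ i) (ρ i)
      = ∑ a ∈ ({1,-1} : Finset ℝ), ∑ b ∈ ({1,-1} : Finset ℝ),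
          ∑ c ∈ Finset.Icc 3 K, ∑ r ∈ ({1,-1} : Finset ℝ),
            F a b c r * N := by
  classical
  set t : Finset (ℝ × ℝ × ℕ × ℝ) :=
    ({1,-1} : Finset ℝ) ×ˢ (({1,-1} : Finset ℝ) ×ˢ ((Finset.Icc 3 K) ×ˢ ({1,-1} : Finset ℝ)))
    with ht
  have hmaps : ∀ i ∈ (Finset.univ : Finset (Fin mn)),
      (y i, ysub i, κ i, ρ i) ∈ t := by
    intro i _
    simp only [ht, Finset.mem_product, Finset.mem_insert, Finset.mem_singleton,
      Finset.mem_Icc]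
    exact ⟨hy i, hysub i, ⟨(hκ i).1, (hκ i).2⟩, hρ i⟩
  have h1 := Finset.sum_fiberwise_of_maps_to (t := t)
    (g := fun i => (y i, ysub i, κ i, ρ i)) hmaps
    (fun i => F (y i) (ysub i) (κ i) (ρ i))
  rw [← h1, ht, Finset.sum_product, Finset.sum_congr rfl]
  intro a ha
  rw [Finset.sum_product, Finset.sum_congr rfl]
  intro b hb
  rw [Finset.sum_product, Finset.sum_congr rfl]
  intro c hc
  refine Finset.sum_congr rfl ?_
  intro r hr
  have hfib : ∀ i ∈ Finset.univ.filter
      (fun i => (y i, ysub i, κ i, ρ i) = (a, b, c, r)),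
      F (y i) (ysub i) (κ i) (ρ i) = F a b c r := by
    intro i hi
    simp only [Finset.mem_filter, Prod.mk.injEq] at hi
    rw [hi.2.1, hi.2.2.1, hi.2.2.2.1, hi.2.2.2.2]
  rw [Finset.sum_congr rfl hfib, Finset.sum_const, nsmul_eq_mul, mul_comm]
  congr 1
  have hmem : (a = 1 ∨ a = -1) ∧ (b = 1 ∨ b = -1) ∧ (3 ≤ c ∧ c ≤ K) ∧ (r = 1 ∨ r = -1) := by
    simp only [Finset.mem_insert, Finset.mem_singleton, Finset.mem_Icc] at ha hb hc hr
    exact ⟨ha, hb, hc, hr⟩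
  have := hbal a b r c hmem.1 hmem.2.1 hmem.2.2.2 hmem.2.2.1.1 hmem.2.2.1.2
  rw [Set.ncard_eq_toFinset_card'] at this
  norm_cast
  rw [← this]
  congr 1
  ext i
  simp [Prod.mk.injEq, and_assoc]

theorem stmt_11
    (m K n D : ℕ)
    (hm : 1 ≤ m) (hK : 3 ≤ K) (hn : 1 ≤ n) (hdiv : 8 * (K - 2) ∣ n)
    (hD : K + 1 + m * n ≤ D)
    (φ : ℕ → ℝ) (hφ : ∀ j, 1 ≤ j → j ≤ K → 0 < φ j)
    (μ σξ : ℝ) (hσ : 0 < σξ)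
    (v : ℕ → Fin D → ℝ)
    (hortho : ∀ i j, i ≤ K + m * n → j ≤ K + m * n →
      (∑ t, v i t * v j t) = if i = j then (1 : ℝ) else 0)
    (y ysub ρ : Fin (m * n) → ℝ) (κ : Fin (m * n) → ℕ)
    (hy : ∀ i, y i = 1 ∨ y i = -1)
    (hysub : ∀ i, ysub i = 1 ∨ ysub i = -1)
    (hρ : ∀ i, ρ i = 1 ∨ ρ i = -1)
    (hκ : ∀ i, 3 ≤ κ i ∧ κ i ≤ K)
    (hblock : ∀ i j : Fin (m * n), i.1 / m = j.1 / m →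
      y i = y j ∧ ysub i = ysub j ∧ κ i = κ j ∧ ρ i = ρ j)
    (hbal : ∀ (a b r : ℝ) (c : ℕ), (a = 1 ∨ a = -1) → (b = 1 ∨ b = -1) →
      (r = 1 ∨ r = -1) → 3 ≤ c → c ≤ K →
      Set.ncard {i : Fin (m * n) | y i = a ∧ ysub i = b ∧ κ i = c ∧ ρ i = r}
        = m * n / (8 * (K - 2)))
    (x : Fin (m * n) → Fin D → ℝ)
    (hx : ∀ i, x i = fun t => v 0 t + y i * φ 1 * v 1 t + (ysub i * φ 2 + μ) * v 2 t
      + ρ i * φ (κ i) * v (κ i) t + σξ * v (K + 1 + i.1) t)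
    (M Mp : Matrix (Fin D) (Fin D) ℝ)
    (hM : M = ((m * n : ℝ))⁻¹ • ∑ i, Matrix.vecMulVec (x i) (x i))
    (xbar : ℝ → Fin D → ℝ)
    (hxbar : ∀ ε, xbar ε = (2 / (m * n : ℝ)) •
      ∑ i, Set.indicator {j : Fin (m * n) | y j = ε} x i)
    (hMp : Mp = (2 : ℝ)⁻¹ • (Matrix.vecMulVec (xbar 1) (xbar 1)
      + Matrix.vecMulVec (xbar (-1)) (xbar (-1))))
    (hμ : μ = 0) :
    ∀ w u : Fin D → ℝ, v 2 = w + u → M.mulVec w = 0 →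
      (∀ z : Fin D → ℝ, M.mulVec z = 0 → (∑ t, u t * z t) = 0) →
      Real.sqrt (∑ t, (w t) ^ 2) = σξ / Real.sqrt ((m * n : ℝ) * φ 2 ^ 2 + σξ ^ 2) := by
  classical
  intro w u hvwu hMw hu
  -- basic positivity facts
  have hφ2 : 0 < φ 2 := hφ 2 (by norm_num) (by omega)
  have hmR : (0:ℝ) < m := by exact_mod_cast hm
  have hnR : (0:ℝ) < n := by exact_mod_cast hn
  have hmn : ((m:ℝ) * n) ≠ 0 := by positivity
  set T : ℝ := (m:ℝ) * n * φ 2 ^ 2 + σξ ^ 2 with hT_def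
  have hT : 0 < T := by positivity
  set α : ℝ := φ 2 / T with hα_def
  -- dot product expansion
  have hexp : ∀ (j : Fin (m*n)) (z : Fin D → ℝ), ∑ t, x j t * z t =
      (∑ t, v 0 t * z t) + y j * φ 1 * (∑ t, v 1 t * z t)
      + ysub j * φ 2 * (∑ t, v 2 t * z t)
      + ρ j * φ (κ j) * (∑ t, v (κ j) t * z t)
      + σξ * (∑ t, v (K+1+j.1) t * z t) := by
    intro j z
    have h : ∀ t, x j t * z t = v 0 t * z t + y j * φ 1 * (v 1 t * z t)
        + ysub j * φ 2 * (v 2 t * z t) + ρ j * φ (κ j) * (v (κ j) t * z t)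
        + σξ * (v (K+1+j.1) t * z t) := by
      intro t; simp only [hx j, hμ]; ring
    simp_rw [h]
    rw [Finset.sum_add_distrib, Finset.sum_add_distrib, Finset.sum_add_distrib,
      Finset.sum_add_distrib, ← Finset.mul_sum, ← Finset.mul_sum, ← Finset.mul_sum,
      ← Finset.mul_sum]
  have hiK : ∀ i : Fin (m*n), K+1+i.1 ≤ K + m*n := by
    intro i; have := i.2; omega
  have hA : ∀ j, ∑ t, x j t * v 2 t = ysub j * φ 2 := by
    intro j
    have hκj := hκ j
    rw [hexp j (v 2), hortho 0 2 (by omega) (by omega), hortho 1 2 (by omega) (by omega),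
      hortho 2 2 (by omega) (by omega), hortho (κ j) 2 (by omega) (by omega),
      hortho (K+1+j.1) 2 (hiK j) (by omega)]
    have h1 : κ j ≠ 2 := by omega
    have h2 : K+1+j.1 ≠ 2 := by omega
    simp [h1, h2]
  have hB : ∀ (j i : Fin (m*n)), ∑ t, x j t * v (K+1+i.1) t
      = if j = i then σξ else 0 := by
    intro j i
    have hκj := hκ j
    have hii := i.2
    rw [hexp j (v (K+1+i.1)), hortho 0 _ (by omega) (hiK i), hortho 1 _ (by omega) (hiK i),
      hortho 2 _ (by omega) (hiK i), hortho (κ j) _ (by omega) (hiK i),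
      hortho (K+1+j.1) _ (hiK j) (hiK i)]
    have h0 : (0:ℕ) ≠ K+1+i.1 := by omega
    have h1 : (1:ℕ) ≠ K+1+i.1 := by omega
    have h2 : (2:ℕ) ≠ K+1+i.1 := by omega
    have h3 : κ j ≠ K+1+i.1 := by omega
    have h4 : (K+1+j.1 = K+1+i.1) ↔ j = i := by
      constructor
      · intro h; exact Fin.ext (by omega)
      · intro h; rw [h]
    simp only [if_neg h0, if_neg h1, if_neg h2, if_neg h3, h4]
    by_cases h : j = i <;> simp [h]
  -- balance sums
  have hne1 : (1:ℝ) ≠ -1 := by norm_num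
  have hbalN := bal_sum_aux y ysub ρ κ hy hysub hρ hκ (m*n/(8*(K-2))) hbal
  have S1 : ∑ i, ysub i = 0 := by
    have h := hbalN (fun a b c r => b)
    rw [h]
    simp only [Finset.sum_pair hne1, ← Finset.sum_add_distrib]
    refine Finset.sum_eq_zero fun c _ => by ring
  have S2 : ∑ i, y i * ysub i = 0 := by
    have h := hbalN (fun a b c r => a * b)
    rw [h]
    simp only [Finset.sum_pair hne1, ← Finset.sum_add_distrib]
    refine Finset.sum_eq_zero fun c _ => by ring
  have S3 : ∀ k, ∑ i, (if κ i = k then ysub i * ρ i else 0) = 0 := by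
    intro k
    have h := hbalN (fun a b c r => if c = k then b * r else 0)
    rw [h]
    simp only [Finset.sum_pair hne1, ← Finset.sum_add_distrib]
    refine Finset.sum_eq_zero fun c _ => by split_ifs <;> ring
  have Ssq : ∑ i, ysub i ^ 2 = (m*n : ℝ) := by
    have h : ∀ i : Fin (m*n), ysub i ^ 2 = 1 := by
      intro i; rcases hysub i with h | h <;> rw [h] <;> norm_num
    simp_rw [h]
    simp
  -- the explicit vector s
  set s : Fin D → ℝ := fun t => ∑ i, ysub i * x i t with hs_def
  have hs : ∀ t, s t = (m:ℝ) * n * φ 2 * v 2 t + σξ * ∑ i, ysub i * v (K+1+i.1) t := by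
    intro t
    have h : ∀ i : Fin (m*n), ysub i * x i t
        = ysub i * v 0 t + (y i * ysub i) * (φ 1 * v 1 t)
          + ysub i ^ 2 * (φ 2 * v 2 t)
          + (∑ k ∈ Finset.Icc 3 K, (if κ i = k then ysub i * ρ i else 0) * (φ k * v k t))
          + ysub i * (σξ * v (K+1+i.1) t) := by
      intro i
      have hsum : (∑ k ∈ Finset.Icc 3 K, (if κ i = k then ysub i * ρ i else 0) * (φ k * v k t))
          = ysub i * ρ i * (φ (κ i) * v (κ i) t) := by
        rw [Finset.sum_congr rfl (fun k _ => ite_mul _ _ _ _)]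
        simp only [zero_mul]
        rw [Finset.sum_ite_eq (Finset.Icc 3 K) (κ i)
          (fun k => ysub i * ρ i * (φ k * v k t))]
        simp [Finset.mem_Icc, (hκ i).1, (hκ i).2]
      rw [hsum, hx i, hμ]
      ring
    simp_rw [hs_def, h, Finset.sum_add_distrib]
    rw [Finset.sum_comm]
    simp_rw [← Finset.sum_mul]
    rw [S1, S2, Ssq]
    simp only [zero_mul, zero_add]
    rw [Finset.sum_congr rfl (fun k _ => by rw [S3 k])]
    simp only [zero_mul, Finset.sum_const_zero, add_zero]
    rw [Finset.mul_sum]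
    rw [Finset.sum_congr rfl (fun i _ => by ring : ∀ i ∈ Finset.univ,
      ysub i * (σξ * v (K + 1 + (i:Fin (m*n)).1) t) = σξ * (ysub i * v (K + 1 + i.1) t))]
    rw [← Finset.mul_sum]
    ring
  -- x_j ⬝ s
  have hxs : ∀ j, ∑ t, x j t * s t = T * ysub j := by
    intro j
    have h : ∀ t, x j t * s t
        = (m:ℝ) * n * φ 2 * (x j t * v 2 t)
          + ∑ i, σξ * ysub i * (x j t * v (K+1+i.1) t) := by
      intro t
      rw [hs t, mul_add, Finset.mul_sum, Finset.mul_sum]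
      rw [Finset.sum_congr rfl (fun i _ => by ring : ∀ i ∈ Finset.univ,
        x j t * (σξ * (ysub i * v (K + 1 + (i:Fin (m*n)).1) t))
          = σξ * ysub i * (x j t * v (K + 1 + i.1) t))]
      ring
    simp_rw [h]
    rw [Finset.sum_add_distrib, ← Finset.mul_sum, hA j, Finset.sum_comm]
    have h2 : ∀ i : Fin (m*n), ∑ t, σξ * ysub i * (x j t * v (K+1+i.1) t)
        = σξ * ysub i * (if j = i then σξ else 0) := by
      intro i
      rw [← Finset.mul_sum, hB j i]
    rw [Finset.sum_congr rfl (fun i _ => h2 i)]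
    have h3 : ∀ i : Fin (m*n), σξ * ysub i * (if j = i then σξ else 0)
        = if j = i then σξ * ysub i * σξ else 0 := by
      intro i; split_ifs <;> ring
    rw [Finset.sum_congr rfl (fun i _ => h3 i), Finset.sum_ite_eq]
    simp only [Finset.mem_univ, if_true]
    rw [hT_def]
    ring
  -- kernel machinery
  have hMz : ∀ z : Fin D → ℝ, M.mulVec z
      = fun a => ((m:ℝ) * n)⁻¹ * ∑ i, (∑ t, x i t * z t) * x i a := by
    intro z
    funext a
    rw [hM]
    simp only [Matrix.mulVec, Matrix.smul_apply, Matrix.sum_apply, dotProduct,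
      Matrix.vecMulVec_apply, smul_eq_mul, Finset.sum_mul, Finset.mul_sum]
    rw [Finset.sum_comm]
    exact Finset.sum_congr rfl fun i _ => Finset.sum_congr rfl fun b _ => by ring
  have hker : ∀ z : Fin D → ℝ, M.mulVec z = 0 → ∀ i, ∑ t, x i t * z t = 0 := by
    intro z hz i
    have h0 : ∑ a, z a * (M.mulVec z a) = 0 := by
      rw [hz]; simp
    rw [hMz z] at h0
    have h1 : ∑ a, z a * (((m:ℝ) * n)⁻¹ * ∑ i, (∑ t, x i t * z t) * x i a)
        = ((m:ℝ) * n)⁻¹ * ∑ i, (∑ t, x i t * z t)^2 := by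
      simp only [Finset.mul_sum]
      rw [Finset.sum_comm]
      refine Finset.sum_congr rfl fun i _ => ?_
      have h2 : ∀ a, z a * (((m:ℝ) * n)⁻¹ * ((∑ t, x i t * z t) * x i a))
          = (((m:ℝ) * n)⁻¹ * (∑ t, x i t * z t)) * (x i a * z a) := fun a => by ring
      simp_rw [h2]
      rw [← Finset.mul_sum]
      ring
    rw [h1] at h0
    have h2 : ∑ i, (∑ t, x i t * z t)^2 = 0 :=
      (mul_eq_zero.mp h0).resolve_left (inv_ne_zero hmn)
    have := (Finset.sum_eq_zero_iff_of_nonneg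
      (fun i _ => sq_nonneg (∑ t, x i t * z t))).mp h2 i (Finset.mem_univ i)
    exact pow_eq_zero_iff two_ne_zero |>.mp this
  -- the canonical decomposition
  set w₀ : Fin D → ℝ := fun t => v 2 t - α * s t with hw0_def
  have hxw0 : ∀ i, ∑ t, x i t * w₀ t = 0 := by
    intro i
    have h : ∀ t, x i t * w₀ t = x i t * v 2 t - α * (x i t * s t) := by
      intro t; rw [hw0_def]; ring
    simp_rw [h]
    rw [Finset.sum_sub_distrib, ← Finset.mul_sum, hA i, hxs i, hα_def]
    field_simp
    ring
  -- the given w coincides with w₀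
  have hxw : ∀ i, ∑ t, x i t * w t = 0 := hker w hMw
  set d : Fin D → ℝ := fun t => w t - w₀ t with hd_def
  have hxd : ∀ i, ∑ t, x i t * d t = 0 := by
    intro i
    have h : ∀ t, x i t * d t = x i t * w t - x i t * w₀ t := by
      intro t; rw [hd_def]; ring
    simp_rw [h]
    rw [Finset.sum_sub_distrib, hxw i, hxw0 i, sub_zero]
  have hMd : M.mulVec d = 0 := by
    rw [hMz d]
    funext a
    simp_rw [hxd]
    simp
  have hud : ∑ t, u t * d t = 0 := hu d hMd
  have hsdot : ∀ z : Fin D → ℝ, (∀ i, ∑ t, x i t * z t = 0) → ∑ t, s t * z t = 0 := by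
    intro z hz
    rw [hs_def]
    simp only [Finset.sum_mul]
    rw [Finset.sum_comm]
    refine Finset.sum_eq_zero fun i _ => ?_
    have h : ∀ t, ysub i * x i t * z t = ysub i * (x i t * z t) := fun t => by ring
    simp_rw [h]
    rw [← Finset.mul_sum, hz i, mul_zero]
  have hsd : ∑ t, s t * d t = 0 := hsdot d hxd
  have hdu : ∀ t, d t = α * s t - u t := by
    intro t
    have hv : v 2 t = w t + u t := by rw [hvwu]; rfl
    rw [hd_def]
    simp only [hw0_def]
    rw [hv]
    ring
  have hd0 : ∀ t, d t = 0 := by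
    have hsum : ∑ t, d t ^ 2 = 0 := by
      have h : ∀ t, d t ^ 2 = α * (s t * d t) - u t * d t := by
        intro t
        rw [pow_two]
        nth_rewrite 1 [hdu t]
        ring
      simp_rw [h]
      rw [Finset.sum_sub_distrib, ← Finset.mul_sum, hsd, hud]
      ring
    intro t
    have := (Finset.sum_eq_zero_iff_of_nonneg
      (fun t _ => sq_nonneg (d t))).mp hsum t (Finset.mem_univ t)
    exact pow_eq_zero_iff two_ne_zero |>.mp this
  have hww0 : ∀ t, w t = w₀ t := by
    intro t
    have h : w t - w₀ t = 0 := hd0 t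
    linarith
  -- norm of w₀
  have hsw0 : ∑ t, s t * w₀ t = 0 := hsdot w₀ hxw0
  have hsv2 : ∑ t, s t * v 2 t = φ 2 * ((m:ℝ) * n) := by
    rw [hs_def]
    simp only [Finset.sum_mul]
    rw [Finset.sum_comm]
    have h : ∀ i : Fin (m*n), ∑ t, ysub i * x i t * v 2 t = ysub i * (ysub i * φ 2) := by
      intro i
      have h2 : ∀ t, ysub i * x i t * v 2 t = ysub i * (x i t * v 2 t) := fun t => by ring
      simp_rw [h2]
      rw [← Finset.mul_sum, hA i]
    rw [Finset.sum_congr rfl (fun i _ => h i)]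
    have h3 : ∀ i : Fin (m*n), ysub i * (ysub i * φ 2) = φ 2 * ysub i ^ 2 := fun i => by ring
    rw [Finset.sum_congr rfl (fun i _ => h3 i), ← Finset.mul_sum, Ssq]
  have hv22 : ∑ t, v 2 t * v 2 t = 1 := by
    rw [hortho 2 2 (by omega) (by omega)]
    simp
  have hnorm : ∑ t, w₀ t ^ 2 = σξ ^ 2 / T := by
    have h : ∀ t, w₀ t ^ 2 = v 2 t * v 2 t - α * (s t * v 2 t) - α * (s t * w₀ t) := by
      intro t
      simp only [hw0_def]
      ring
    simp_rw [h]
    rw [Finset.sum_sub_distrib, Finset.sum_sub_distrib, ← Finset.mul_sum, ← Finset.mul_sum,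
      hv22, hsv2, hsw0, hα_def, hT_def]
    field_simp
    ring
  -- conclude
  have hWsum : ∑ t, w t ^ 2 = σξ ^ 2 / T := by
    rw [Finset.sum_congr rfl (fun t _ => by rw [hww0 t])]
    exact hnorm
  rw [hWsum, hT_def]
  rw [Real.sqrt_div (by positivity) _, Real.sqrt_sq hσ.le]
end

section
/- (Corollary C.3, subclass feature annihilated by the min-norm solution matrix.) In the structured contrastive dataset with μ = 0, one has v_2ᵀ M† M⁺ M† v_2 = 0; equivalently, every real matrix W with WᵀW = M† M⁺ M† satisfies W v_2 = 0. -/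
/-!
Put `e = v₂` and `uᵢ = v_{K+1+i}`. Balance pairs the samples by a permutation `π` that flips the
subclass label `y_sub` and keeps `y`, `k` and `ρ`. The orthogonal map `P` that negates `e`, sends
`uᵢ` to `u_{π i}` and fixes everything orthogonal to these vectors satisfies `P xᵢ = x_{π i}`
when `μ = 0`. Hence `P M Pᵀ = M` and `P x̄_ε = x̄_ε`. By uniqueness of the pseudoinverse,
`P M† Pᵀ = M†`, so `x̄_ε ⬝ M† v₂` equals its own negative and vanishes. Therefore
`M⁺ M† v₂ = 0`, so `M† M⁺ M† v₂ = 0`, and `‖W v₂‖² = v₂ᵀ Wᵀ W v₂ = 0`.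
-/

open Matrix

/-- `Ad` is the Moore–Penrose pseudoinverse of `A`. -/
def IsPseudoinverse {N : ℕ} (A Ad : Matrix (Fin N) (Fin N) ℝ) : Prop :=
  A * Ad * A = A ∧ Ad * A * Ad = Ad ∧ (A * Ad)ᵀ = A * Ad ∧ (Ad * A)ᵀ = Ad * A

namespace IsPseudoinverse

variable {N : ℕ} {A Ad : Matrix (Fin N) (Fin N) ℝ}

theorem unique {B : Matrix (Fin N) (Fin N) ℝ} (hAd : IsPseudoinverse A Ad)
    (hB : IsPseudoinverse A B) : Ad = B := by
  obtain ⟨h₁, h₂, h₃, h₄⟩ := hAd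
  obtain ⟨k₁, k₂, k₃, k₄⟩ := hB
  have hleft : Ad = Ad * A * B := calc
    Ad = Ad * (A * Ad)ᵀ := by rw [h₃, ← Matrix.mul_assoc, h₂]
    _ = Ad * (A * B * A * Ad)ᵀ := by rw [k₁]
    _ = Ad * ((A * Ad)ᵀ * (A * B)ᵀ) := by simp only [transpose_mul, Matrix.mul_assoc]
    _ = Ad * A * Ad * A * B := by rw [h₃, k₃]; simp only [Matrix.mul_assoc]
    _ = Ad * A * B := by rw [h₂]
  have hright : B = Ad * A * B := calc
    B = (B * A)ᵀ * B := by rw [k₄, k₂]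
    _ = (B * (A * Ad * A))ᵀ * B := by rw [h₁]
    _ = (Ad * A)ᵀ * (B * A)ᵀ * B := by simp only [transpose_mul, Matrix.mul_assoc]
    _ = Ad * A * B := by rw [h₄, k₄, Matrix.mul_assoc, Matrix.mul_assoc, k₂, Matrix.mul_assoc]
  rw [hleft, ← hright]

theorem conj (h : IsPseudoinverse A Ad) {P : Matrix (Fin N) (Fin N) ℝ} (hP : Pᵀ * P = 1) :
    IsPseudoinverse (P * A * Pᵀ) (P * Ad * Pᵀ) := by
  obtain ⟨h₁, h₂, h₃, h₄⟩ := h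
  have hmul : ∀ X Y : Matrix (Fin N) (Fin N) ℝ,
      P * X * Pᵀ * (P * Y * Pᵀ) = P * (X * Y) * Pᵀ := by
    intro X Y
    simp only [Matrix.mul_assoc, ← Matrix.mul_assoc Pᵀ P, hP, Matrix.one_mul]
  have htr : ∀ X : Matrix (Fin N) (Fin N) ℝ, (P * X * Pᵀ)ᵀ = P * Xᵀ * Pᵀ := by
    intro X
    simp only [transpose_mul, transpose_transpose, Matrix.mul_assoc]
  refine ⟨?_, ?_, ?_, ?_⟩
  · rw [hmul, hmul, h₁]
  · rw [hmul, hmul, h₂]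
  · rw [hmul, htr, h₃]
  · rw [hmul, htr, h₄]

theorem conj_eq (h : IsPseudoinverse A Ad) {P : Matrix (Fin N) (Fin N) ℝ} (hP : Pᵀ * P = 1)
    (hA : P * A * Pᵀ = A) : P * Ad * Pᵀ = Ad :=
  (hA ▸ h.conj hP).unique h

end IsPseudoinverse

theorem dotProduct_mulVec_eq_zero_of_conj_eq {n R : Type*} [Fintype n] [DecidableEq n]
    [CommRing R] [NoZeroDivisors R] [CharZero R] {P B : Matrix n n R} {a u : n → R}
    (hP : Pᵀ * P = 1) (hB : P * B * Pᵀ = B) (ha : P *ᵥ a = a) (hu : P *ᵥ u = -u) :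
    a ⬝ᵥ B *ᵥ u = 0 := by
  have hPa : Pᵀ *ᵥ a = a := by
    have h := congrArg (Pᵀ *ᵥ ·) ha
    simp only [mulVec_mulVec, hP, one_mulVec] at h
    exact h.symm
  have hPu : Pᵀ *ᵥ u = -u := by
    have h := congrArg (Pᵀ *ᵥ ·) hu
    simp only [mulVec_mulVec, hP, one_mulVec, mulVec_neg] at h
    exact neg_eq_iff_eq_neg.mp h.symm
  have hanti : a ⬝ᵥ B *ᵥ u = -(a ⬝ᵥ B *ᵥ u) := calc
    a ⬝ᵥ B *ᵥ u = a ⬝ᵥ P *ᵥ B *ᵥ Pᵀ *ᵥ u := by rw [mulVec_mulVec, mulVec_mulVec, hB]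
    _ = (Pᵀ *ᵥ a) ⬝ᵥ B *ᵥ Pᵀ *ᵥ u := by rw [dotProduct_mulVec, ← mulVec_transpose]
    _ = -(a ⬝ᵥ B *ᵥ u) := by rw [hPa, hPu, mulVec_neg, dotProduct_neg]
  exact self_eq_neg.mp hanti

namespace Matrix

variable {n ι R : Type*} [Fintype n] [DecidableEq n] [Fintype ι] [DecidableEq ι] [CommRing R]

-- For `Uᵀ * U = 1`: acts as `S` in the coordinates along the columns of `U`, and as the
-- identity on their orthogonal complement.
def extendByIdentity (U : Matrix n ι R) (S : Matrix ι ι R) : Matrix n n R :=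
  1 - U * Uᵀ + U * S * Uᵀ

variable {U : Matrix n ι R} {S : Matrix ι ι R}

theorem extendByIdentity_transpose_mul_self (hU : Uᵀ * U = 1) (hS : Sᵀ * S = 1) :
    (extendByIdentity U S)ᵀ * extendByIdentity U S = 1 := by
  have hUU : ∀ X : Matrix ι n R, Uᵀ * (U * X) = X := fun X => by
    rw [← Matrix.mul_assoc, hU, Matrix.one_mul]
  have hSS : ∀ X : Matrix ι n R, Sᵀ * (S * X) = X := fun X => by
    rw [← Matrix.mul_assoc, hS, Matrix.one_mul]
  simp only [extendByIdentity, transpose_add, transpose_sub, transpose_mul, transpose_one,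
    transpose_transpose, Matrix.add_mul, Matrix.sub_mul, Matrix.mul_add, Matrix.mul_sub,
    Matrix.one_mul, Matrix.mul_one, Matrix.mul_assoc, hUU, hSS]
  abel

theorem extendByIdentity_mul_self (hU : Uᵀ * U = 1) : extendByIdentity U S * U = U * S := by
  simp only [extendByIdentity, Matrix.add_mul, Matrix.sub_mul, Matrix.one_mul, Matrix.mul_assoc,
    hU, Matrix.mul_one]
  abel

theorem extendByIdentity_mulVec_add (hU : Uᵀ * U = 1) {w : n → R} (hw : Uᵀ *ᵥ w = 0)
    (c : ι → R) : extendByIdentity U S *ᵥ (w + U *ᵥ c) = w + U *ᵥ S *ᵥ c := by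
  have hfix : extendByIdentity U S *ᵥ w = w := by
    simp only [extendByIdentity, add_mulVec, sub_mulVec, one_mulVec, ← mulVec_mulVec, hw,
      mulVec_zero, sub_zero, add_zero]
  rw [mulVec_add, hfix, mulVec_mulVec, extendByIdentity_mul_self hU, ← mulVec_mulVec]

end Matrix

theorem exists_orthogonal_mulVec_perm_of_orthonormal {n ι R : Type*} [Fintype n] [DecidableEq n]
    [Fintype ι] [DecidableEq ι] [CommRing R] {e : n → R} {u : ι → n → R} (he : e ⬝ᵥ e = 1)
    (heu : ∀ j, e ⬝ᵥ u j = 0) (hu : ∀ i j, u i ⬝ᵥ u j = if i = j then 1 else 0)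
    (π : Equiv.Perm ι) {x w : ι → n → R} {b : ι → R} {s : R}
    (hx : ∀ i, x i = w i + b i • e + s • u i) (hwe : ∀ i, e ⬝ᵥ w i = 0)
    (hwu : ∀ i j, u j ⬝ᵥ w i = 0) (hw : ∀ i, w (π i) = w i) (hb : ∀ i, b (π i) = -b i) :
    ∃ P : Matrix n n R, Pᵀ * P = 1 ∧ (∀ i, P *ᵥ x i = x (π i)) ∧ P *ᵥ e = -e := by
  let f : Unit ⊕ ι → n → R := Sum.elim (fun _ => e) u
  let U : Matrix n (Unit ⊕ ι) R := (of f)ᵀ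
  -- `S` negates the `e`-coordinate and moves the `u i`-coordinate to `u (π i)`.
  let S : Matrix (Unit ⊕ ι) (Unit ⊕ ι) R := fromBlocks (-1) 0 0 (π⁻¹.permMatrix R)
  have hU : Uᵀ * U = 1 := by
    ext a c
    change f a ⬝ᵥ f c = _
    rcases a with _ | i <;> rcases c with _ | j <;>
      simp [f, he, heu, hu, dotProduct_comm, one_apply]
  have hS : Sᵀ * S = 1 := by
    simp [S, fromBlocks_transpose, fromBlocks_multiply, ← permMatrix_mul]
  have hUc : ∀ (a : R) (d : ι → R), U *ᵥ Sum.elim (fun _ => a) d = a • e + ∑ j, d j • u j := by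
    intro a d
    ext k
    simp [U, f, mulVec, dotProduct, Fintype.sum_sum_type, mul_comm]
  have hSc : ∀ (a : R) (d : ι → R),
      S *ᵥ Sum.elim (fun _ => a) d = Sum.elim (fun _ => -a) (d ∘ ⇑(π⁻¹ : Equiv.Perm ι)) := by
    intro a d
    simp [S, fromBlocks_mulVec, permMatrix_mulVec, neg_mulVec, Pi.neg_def]
  have hUe : U *ᵥ Sum.elim (fun _ => 1) 0 = e := by simp [hUc]
  have hxU : ∀ i, x i = w i + U *ᵥ Sum.elim (fun _ => b i) (Pi.single i s) := by
    intro i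
    simp [hUc, hx i, Pi.single_apply, ite_smul, add_assoc]
  refine ⟨extendByIdentity U S, extendByIdentity_transpose_mul_self hU hS, fun i => ?_, ?_⟩
  · have hwU : Uᵀ *ᵥ w i = 0 := by
      ext (_ | j)
      exacts [hwe i, hwu i j]
    rw [hxU i, extendByIdentity_mulVec_add hU hwU, hSc, hxU (π i), hw i, hb i]
    congr 3
    show Pi.single i s ∘ ⇑(π⁻¹ : Equiv.Perm ι) = Pi.single (π i) s
    ext j
    simp [Pi.single_apply, Equiv.eq_symm_apply, eq_comm]
  · have h := extendByIdentity_mulVec_add (S := S) hU (mulVec_zero Uᵀ) (Sum.elim (fun _ => 1) 0)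
    rw [zero_add, zero_add, hUe, hSc] at h
    rw [h, ← hUe]
    simp [hUc]

section Perm

variable {n ι R : Type*} [Fintype n] [Fintype ι] [CommRing R]

theorem mul_sum_vecMulVec_mul_transpose_of_perm {P : Matrix n n R} {x : ι → n → R}
    (π : Equiv.Perm ι) (hx : ∀ i, P *ᵥ x i = x (π i)) :
    P * (∑ i, vecMulVec (x i) (x i)) * Pᵀ = ∑ i, vecMulVec (x i) (x i) := by
  simp only [Finset.mul_sum, Finset.sum_mul, mul_vecMulVec, vecMulVec_mul, vecMul_transpose, hx]
  exact Equiv.sum_comp π fun i => vecMulVec (x i) (x i)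

theorem mulVec_sum_indicator_of_perm {P : Matrix n n R} {x : ι → n → R}
    (π : Equiv.Perm ι) (hx : ∀ i, P *ᵥ x i = x (π i)) {s : Set ι} (hs : ∀ i, π i ∈ s ↔ i ∈ s) :
    P *ᵥ ∑ i, s.indicator x i = ∑ i, s.indicator x i := by
  have hind : ∀ i, P *ᵥ s.indicator x i = s.indicator x (π i) := fun i => by
    by_cases hi : i ∈ s
    · rw [Set.indicator_of_mem hi, Set.indicator_of_mem ((hs i).mpr hi), hx]
    · rw [Set.indicator_of_notMem hi, Set.indicator_of_notMem (mt (hs i).mp hi), mulVec_zero]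
  rw [mulVec_sum]
  simp only [hind]
  exact Equiv.sum_comp π (s.indicator x)

end Perm

theorem Equiv.Perm.exists_apply_eq_of_card_fiber {α β : Type*} [Finite α] (f : α → β)
    (g : β ≃ β) (h : ∀ b, Nat.card {a // f a = g b} = Nat.card {a // f a = b}) :
    ∃ π : Equiv.Perm α, ∀ a, f (π a) = g (f a) := by
  have e : ∀ c, {a // g (f a) = c} ≃ {a // f a = c} := fun c =>
    (Equiv.subtypeEquivRight fun a => g.eq_symm_apply.symm).trans
      (Finite.card_eq.mp (by rw [← h, g.apply_symm_apply])).some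
  exact ⟨Equiv.ofFiberEquiv e, Equiv.ofFiberEquiv_map e⟩

theorem exists_perm_flip_subclass {N K C : ℕ} (y ysub ρ : Fin N → ℝ) (κ : Fin N → ℕ)
    (hy : ∀ i, y i = 1 ∨ y i = -1) (hysub : ∀ i, ysub i = 1 ∨ ysub i = -1)
    (hρ : ∀ i, ρ i = 1 ∨ ρ i = -1) (hκ : ∀ i, 3 ≤ κ i ∧ κ i ≤ K)
    (hbal : ∀ (a b r : ℝ) (c : ℕ), (a = 1 ∨ a = -1) → (b = 1 ∨ b = -1) →
      (r = 1 ∨ r = -1) → 3 ≤ c → c ≤ K →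
      Set.ncard {i : Fin N | y i = a ∧ ysub i = b ∧ κ i = c ∧ ρ i = r} = C) :
    ∃ π : Equiv.Perm (Fin N),
      ∀ i, y (π i) = y i ∧ ysub (π i) = -ysub i ∧ κ (π i) = κ i ∧ ρ (π i) = ρ i := by
  let label : Fin N → ℝ × ℝ × ℕ × ℝ := fun i => (y i, ysub i, κ i, ρ i)
  let flip : ℝ × ℝ × ℕ × ℝ ≃ ℝ × ℝ × ℕ × ℝ :=
    (Equiv.refl ℝ).prodCongr ((Equiv.neg ℝ).prodCongr (Equiv.refl (ℕ × ℝ)))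
  have hcard : ∀ a b r c, Nat.card {i // label i = (a, b, c, r)} =
      Set.ncard {i : Fin N | y i = a ∧ ysub i = b ∧ κ i = c ∧ ρ i = r} := by
    intro a b r c
    rw [← Nat.card_coe_set_eq]
    exact Nat.card_congr (Equiv.subtypeEquivRight fun i => by simp [label])
  have hempty : ∀ a b r c,
      ¬((a = 1 ∨ a = -1) ∧ (b = 1 ∨ b = -1) ∧ (r = 1 ∨ r = -1) ∧ 3 ≤ c ∧ c ≤ K) →
      Set.ncard {i : Fin N | y i = a ∧ ysub i = b ∧ κ i = c ∧ ρ i = r} = 0 := by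
    intro a b r c hinv
    rw [Set.ncard_eq_zero, Set.eq_empty_iff_forall_notMem]
    rintro i ⟨rfl, rfl, rfl, rfl⟩
    exact hinv ⟨hy i, hysub i, hρ i, hκ i⟩
  have hneg : ∀ b : ℝ, (-b = 1 ∨ -b = -1) ↔ (b = 1 ∨ b = -1) := fun b => by
    rw [neg_eq_iff_eq_neg, neg_inj, or_comm]
  obtain ⟨π, hπ⟩ := Equiv.Perm.exists_apply_eq_of_card_fiber label flip (by
    rintro ⟨a, b, c, r⟩
    change Nat.card {i // label i = (a, -b, c, r)} = Nat.card {i // label i = (a, b, c, r)}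
    rw [hcard, hcard]
    by_cases hvalid : (a = 1 ∨ a = -1) ∧ (b = 1 ∨ b = -1) ∧ (r = 1 ∨ r = -1) ∧ 3 ≤ c ∧ c ≤ K
    · obtain ⟨ha, hb, hr, hc₃, hcK⟩ := hvalid
      rw [hbal a b r c ha hb hr hc₃ hcK, hbal a (-b) r c ha ((hneg b).mpr hb) hr hc₃ hcK]
    · rw [hempty a b r c hvalid, hempty a (-b) r c (by rwa [hneg])])
  exact ⟨π, fun i => by simpa [label, flip] using hπ i⟩

theorem exists_orthogonal_of_subclass_flip {D N K : ℕ} (hK : 2 ≤ K) (v : ℕ → Fin D → ℝ)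
    (hortho : ∀ i j, i ≤ K + N → j ≤ K + N → v i ⬝ᵥ v j = if i = j then 1 else 0)
    (φ : ℕ → ℝ) (σξ : ℝ) (y ysub ρ : Fin N → ℝ) (κ : Fin N → ℕ)
    (hκ : ∀ i, 3 ≤ κ i ∧ κ i ≤ K) (x : Fin N → Fin D → ℝ)
    (hx : ∀ i, x i = v 0 + (y i * φ 1) • v 1 + (ρ i * φ (κ i)) • v (κ i)
      + (ysub i * φ 2) • v 2 + σξ • v (K + 1 + i.1))
    (π : Equiv.Perm (Fin N))
    (hπ : ∀ i, y (π i) = y i ∧ ysub (π i) = -ysub i ∧ κ (π i) = κ i ∧ ρ (π i) = ρ i) :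
    ∃ P : Matrix (Fin D) (Fin D) ℝ,
      Pᵀ * P = 1 ∧ (∀ i, P *ᵥ x i = x (π i)) ∧ P *ᵥ v 2 = -v 2 := by
  have hv : ∀ a b, a ≤ K + N → b ≤ K + N → a ≠ b → v a ⬝ᵥ v b = 0 := fun a b ha hb hab => by
    rw [hortho a b ha hb, if_neg hab]
  let w : Fin N → Fin D → ℝ := fun i => v 0 + (y i * φ 1) • v 1 + (ρ i * φ (κ i)) • v (κ i)
  have hwv : ∀ i a, a ≤ K + N → a ≠ 0 → a ≠ 1 → a ≠ κ i → v a ⬝ᵥ w i = 0 := by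
    intro i a ha h0 h1 hk
    have := hκ i
    simp only [w, dotProduct_add, dotProduct_smul, hv a 0 ha (by omega) h0,
      hv a 1 ha (by omega) h1, hv a (κ i) ha (by omega) hk, smul_zero, add_zero]
  refine exists_orthogonal_mulVec_perm_of_orthonormal (e := v 2) (u := fun i => v (K + 1 + i.1))
    (by rw [hortho 2 2 (by omega) (by omega), if_pos rfl])
    (fun j => hv _ _ (by omega) (by omega) (by omega))
    (fun i j => by simp [hortho (K + 1 + i.1) (K + 1 + j.1) (by omega) (by omega), Fin.val_inj])
    π (w := w) (b := fun i => ysub i * φ 2) (s := σξ) hx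
    (fun i => hwv i 2 (by omega) (by omega) (by omega) (by have := hκ i; omega))
    (fun i j => hwv i _ (by omega) (by omega) (by omega) (by have := hκ i; omega))
    (fun i => by simp only [w, (hπ i).1, (hπ i).2.2.1, (hπ i).2.2.2])
    (fun i => by simp only [(hπ i).2.1, neg_mul])

theorem stmt_12_general
    (m K n D : ℕ)
    (hK : 3 ≤ K)
    (φ : ℕ → ℝ)
    (μ σξ : ℝ)
    (v : ℕ → Fin D → ℝ)
    (hortho : ∀ i j, i ≤ K + m * n → j ≤ K + m * n →
      (∑ t, v i t * v j t) = if i = j then (1 : ℝ) else 0)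
    (y ysub ρ : Fin (m * n) → ℝ) (κ : Fin (m * n) → ℕ)
    (hy : ∀ i, y i = 1 ∨ y i = -1)
    (hysub : ∀ i, ysub i = 1 ∨ ysub i = -1)
    (hρ : ∀ i, ρ i = 1 ∨ ρ i = -1)
    (hκ : ∀ i, 3 ≤ κ i ∧ κ i ≤ K)
    (hbal : ∀ (a b r : ℝ) (c : ℕ), (a = 1 ∨ a = -1) → (b = 1 ∨ b = -1) →
      (r = 1 ∨ r = -1) → 3 ≤ c → c ≤ K →
      Set.ncard {i : Fin (m * n) | y i = a ∧ ysub i = b ∧ κ i = c ∧ ρ i = r}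
        = m * n / (8 * (K - 2)))
    (x : Fin (m * n) → Fin D → ℝ)
    (hx : ∀ i, x i = fun t => v 0 t + y i * φ 1 * v 1 t + (ysub i * φ 2 + μ) * v 2 t
      + ρ i * φ (κ i) * v (κ i) t + σξ * v (K + 1 + i.1) t)
    (M Mp : Matrix (Fin D) (Fin D) ℝ)
    (hM : M = ((m * n : ℝ))⁻¹ • ∑ i, Matrix.vecMulVec (x i) (x i))
    (xbar : ℝ → Fin D → ℝ)
    (hxbar : ∀ ε, xbar ε = (2 / (m * n : ℝ)) •
      ∑ i, Set.indicator {j : Fin (m * n) | y j = ε} x i)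
    (hMp : Mp = (2 : ℝ)⁻¹ • (Matrix.vecMulVec (xbar 1) (xbar 1)
      + Matrix.vecMulVec (xbar (-1)) (xbar (-1))))
    (hμ : μ = 0)
    (Md : Matrix (Fin D) (Fin D) ℝ) (hMd : IsPseudoinverse M Md) :
    (v 2) ⬝ᵥ (Md * Mp * Md).mulVec (v 2) = 0 ∧
    ∀ (q : ℕ) (W : Matrix (Fin q) (Fin D) ℝ),
      Wᵀ * W = Md * Mp * Md → W.mulVec (v 2) = 0 := by
  obtain ⟨π, hπ⟩ := exists_perm_flip_subclass y ysub ρ κ hy hysub hρ hκ hbal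
  have hx' : ∀ i, x i = v 0 + (y i * φ 1) • v 1 + (ρ i * φ (κ i)) • v (κ i)
      + (ysub i * φ 2) • v 2 + σξ • v (K + 1 + i.1) := fun i => by
    ext t
    simp only [hx i, hμ, Pi.add_apply, Pi.smul_apply, smul_eq_mul, add_zero]
    ring
  obtain ⟨P, hP, hPx, hPv⟩ :=
    exists_orthogonal_of_subclass_flip (by omega) v hortho φ σξ y ysub ρ κ hκ x hx' π hπ
  have hPM : P * M * Pᵀ = M := by
    rw [hM, Matrix.mul_smul, Matrix.smul_mul, mul_sum_vecMulVec_mul_transpose_of_perm π hPx]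
  have hPxbar : ∀ ε, P *ᵥ xbar ε = xbar ε := fun ε => by
    rw [hxbar, mulVec_smul, mulVec_sum_indicator_of_perm π hPx fun i => by simp [(hπ i).1]]
  have hperp : ∀ ε, xbar ε ⬝ᵥ Md *ᵥ v 2 = 0 := fun ε =>
    dotProduct_mulVec_eq_zero_of_conj_eq hP (hMd.conj_eq hP hPM) (hPxbar ε) hPv
  have hMp0 : Mp *ᵥ Md *ᵥ v 2 = 0 := by
    simp only [hMp, smul_mulVec, add_mulVec, vecMulVec_mulVec, hperp, MulOpposite.op_zero,
      zero_smul, add_zero, smul_zero]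
  have hzero : (Md * Mp * Md) *ᵥ v 2 = 0 := by
    rw [← mulVec_mulVec, ← mulVec_mulVec, hMp0, mulVec_zero]
  refine ⟨by rw [hzero, dotProduct_zero], fun q W hW => ?_⟩
  rwa [← hW, ← conjTranspose_eq_transpose_of_trivial,
    conjTranspose_mul_self_mulVec_eq_zero] at hzero

theorem stmt_12
    (m K n D : ℕ)
    (hm : 1 ≤ m) (hK : 3 ≤ K) (hn : 1 ≤ n) (hdiv : 8 * (K - 2) ∣ n)
    (hD : K + 1 + m * n ≤ D)
    (φ : ℕ → ℝ) (hφ : ∀ j, 1 ≤ j → j ≤ K → 0 < φ j)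
    (μ σξ : ℝ) (hσ : 0 < σξ)
    (v : ℕ → Fin D → ℝ)
    (hortho : ∀ i j, i ≤ K + m * n → j ≤ K + m * n →
      (∑ t, v i t * v j t) = if i = j then (1 : ℝ) else 0)
    (y ysub ρ : Fin (m * n) → ℝ) (κ : Fin (m * n) → ℕ)
    (hy : ∀ i, y i = 1 ∨ y i = -1)
    (hysub : ∀ i, ysub i = 1 ∨ ysub i = -1)
    (hρ : ∀ i, ρ i = 1 ∨ ρ i = -1)
    (hκ : ∀ i, 3 ≤ κ i ∧ κ i ≤ K)
    (hblock : ∀ i j : Fin (m * n), i.1 / m = j.1 / m →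
      y i = y j ∧ ysub i = ysub j ∧ κ i = κ j ∧ ρ i = ρ j)
    (hbal : ∀ (a b r : ℝ) (c : ℕ), (a = 1 ∨ a = -1) → (b = 1 ∨ b = -1) →
      (r = 1 ∨ r = -1) → 3 ≤ c → c ≤ K →
      Set.ncard {i : Fin (m * n) | y i = a ∧ ysub i = b ∧ κ i = c ∧ ρ i = r}
        = m * n / (8 * (K - 2)))
    (x : Fin (m * n) → Fin D → ℝ)
    (hx : ∀ i, x i = fun t => v 0 t + y i * φ 1 * v 1 t + (ysub i * φ 2 + μ) * v 2 t
      + ρ i * φ (κ i) * v (κ i) t + σξ * v (K + 1 + i.1) t)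
    (M Mp : Matrix (Fin D) (Fin D) ℝ)
    (hM : M = ((m * n : ℝ))⁻¹ • ∑ i, Matrix.vecMulVec (x i) (x i))
    (xbar : ℝ → Fin D → ℝ)
    (hxbar : ∀ ε, xbar ε = (2 / (m * n : ℝ)) •
      ∑ i, Set.indicator {j : Fin (m * n) | y j = ε} x i)
    (hMp : Mp = (2 : ℝ)⁻¹ • (Matrix.vecMulVec (xbar 1) (xbar 1)
      + Matrix.vecMulVec (xbar (-1)) (xbar (-1))))
    (hμ : μ = 0)
    (Md : Matrix (Fin D) (Fin D) ℝ) (hMd : IsPseudoinverse M Md) :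
    (v 2) ⬝ᵥ (Md * Mp * Md).mulVec (v 2) = 0 ∧
    ∀ (q : ℕ) (W : Matrix (Fin q) (Fin D) ℝ),
      Wᵀ * W = Md * Mp * Md → W.mulVec (v 2) = 0 :=
  stmt_12_general m K n D hK φ μ σξ v hortho y ysub ρ κ hy hysub hρ hκ hbal x hx M Mp hM xbar hxbar
    hMp hμ Md hMd
end

section
/- (Corollary C.4, irrelevant features annihilated by the min-norm solution matrix.) In the structured contrastive dataset, for every k with 3 ≤ k ≤ K one has v_kᵀ M† M⁺ M† v_k = 0; equivalently, every real matrix W with WᵀW = M† M⁺ M† satisfies W v_k = 0 for all 3 ≤ k ≤ K. -/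
open Matrix

/-!
Fix `3 ≤ k ≤ K`. By balance, the samples with `κ i = k` can be paired off by an involution `f`
that keeps `y` and `y_sub` and flips `ρ`. The orthogonal symmetric involution `R` that negates
`v k`, moves the noise direction of sample `i` to that of `f i` and fixes every other `v j`
sends `x i` to `x (f i)`, so it fixes `M` and the class means. By uniqueness of the Moore–Penrose
pseudoinverse `R` also fixes `M†`, whence `v k ⬝ M† x̄ = (R v k) ⬝ M† (R x̄) = -(v k ⬝ M† x̄)`.
So `M† v k` is orthogonal to both class means, `M⁺ M† v k = 0`, and both claims follow
(`Wᵀ W u = 0` forces `W u = 0`).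
-/

namespace IsPseudoinverse

variable {N : ℕ} {A Ad Ad' R : Matrix (Fin N) (Fin N) ℝ}

theorem unique_s13 (h : IsPseudoinverse A Ad) (h' : IsPseudoinverse A Ad') : Ad = Ad' := by
  obtain ⟨h1, h2, h3, h4⟩ := h
  obtain ⟨h1', h2', h3', h4'⟩ := h'
  have hleft : A * Ad = A * Ad' := calc
    A * Ad = (A * Ad' * A * Ad)ᵀ := by rw [h1', h3]
    _ = (A * Ad)ᵀ * (A * Ad')ᵀ := by simp only [transpose_mul, Matrix.mul_assoc]
    _ = A * Ad' := by rw [h3, h3', ← Matrix.mul_assoc, h1]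
  have hright : Ad * A = Ad' * A := calc
    Ad * A = (Ad * (A * Ad' * A))ᵀ := by rw [h1', h4]
    _ = (Ad' * A)ᵀ * (Ad * A)ᵀ := by simp only [transpose_mul, Matrix.mul_assoc]
    _ = Ad' * A := by rw [h4, h4', Matrix.mul_assoc, ← Matrix.mul_assoc A, h1]
  calc Ad = Ad' * (A * Ad') := by rw [← h2, hright, Matrix.mul_assoc, hleft]
    _ = Ad' := by rw [← Matrix.mul_assoc, h2']

theorem transpose (h : IsPseudoinverse A Ad) : IsPseudoinverse Aᵀ Adᵀ := by
  obtain ⟨h1, h2, h3, h4⟩ := h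
  refine ⟨?_, ?_, ?_, ?_⟩
  · rw [← transpose_mul, ← transpose_mul, ← Matrix.mul_assoc, h1]
  · rw [← transpose_mul, ← transpose_mul, ← Matrix.mul_assoc, h2]
  · rw [← transpose_mul, transpose_transpose, h4]
  · rw [← transpose_mul, transpose_transpose, h3]

theorem transpose_eq_self (h : IsPseudoinverse A Ad) (hA : Aᵀ = A) : Adᵀ = Ad := by
  have h' := h.transpose
  rw [hA] at h'
  exact h'.unique_s13 h

theorem conj_s13 (h : IsPseudoinverse A Ad) (hR : R * Rᵀ = 1) :
    IsPseudoinverse (R * A * Rᵀ) (R * Ad * Rᵀ) := by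
  obtain ⟨h1, h2, h3, h4⟩ := h
  have hmul (X Y : Matrix (Fin N) (Fin N) ℝ) : R * X * Rᵀ * (R * Y * Rᵀ) = R * (X * Y) * Rᵀ :=
    calc R * X * Rᵀ * (R * Y * Rᵀ) = R * X * (Rᵀ * R) * Y * Rᵀ := by
          simp only [Matrix.mul_assoc]
      _ = R * (X * Y) * Rᵀ := by
          rw [mul_eq_one_comm.mp hR, Matrix.mul_one, Matrix.mul_assoc R X Y]
  have htr (X : Matrix (Fin N) (Fin N) ℝ) : (R * X * Rᵀ)ᵀ = R * Xᵀ * Rᵀ := by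
    simp only [transpose_mul, transpose_transpose, Matrix.mul_assoc]
  exact ⟨by rw [hmul, hmul, h1], by rw [hmul, hmul, h2], by rw [hmul, htr, h3],
    by rw [hmul, htr, h4]⟩

theorem conj_eq_self (h : IsPseudoinverse A Ad) (hR : R * Rᵀ = 1) (hA : R * A * Rᵀ = A) :
    R * Ad * Rᵀ = Ad := by
  have h' := h.conj_s13 hR
  rw [hA] at h'
  exact h'.unique_s13 h

end IsPseudoinverse

theorem dotProduct_mulVec_eq_zero_of_reflection {n : Type*} [Fintype n] {R B : Matrix n n ℝ}
    {u b : n → ℝ} (hRT : Rᵀ = R) (hB : R * B * R = B) (hu : R *ᵥ u = -u) (hb : R *ᵥ b = b) :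
    u ⬝ᵥ B *ᵥ b = 0 := by
  have huR : u ᵥ* R = -u := by rw [← hRT, vecMul_transpose, hu]
  have : u ⬝ᵥ B *ᵥ b = -(u ⬝ᵥ B *ᵥ b) := calc
    u ⬝ᵥ B *ᵥ b = u ⬝ᵥ R *ᵥ (B *ᵥ (R *ᵥ b)) := by
      rw [mulVec_mulVec, mulVec_mulVec, hB]
    _ = -(u ⬝ᵥ B *ᵥ b) := by rw [hb, dotProduct_mulVec, huR, neg_dotProduct]
  linarith

section SignedSwap

variable {n ι : Type*} [Fintype n] [DecidableEq n] [Fintype ι]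
  (w : ι → n → ℝ) (g : ι → ι) (ε : ι → ℝ)

noncomputable def signedSwapMatrix : Matrix n n ℝ :=
  1 - ∑ a, vecMulVec (w a) (w a) + ∑ a, vecMulVec (ε a • w (g a)) (w a)

theorem signedSwapMatrix_mulVec (z : n → ℝ) :
    signedSwapMatrix w g ε *ᵥ z
      = z - ∑ a, (w a ⬝ᵥ z) • w a + ∑ a, (w a ⬝ᵥ z) • ε a • w (g a) := by
  simp only [signedSwapMatrix, add_mulVec, sub_mulVec, one_mulVec, sum_mulVec, vecMulVec_mulVec,
    op_smul_eq_smul]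

variable {w g ε}

theorem signedSwapMatrix_mulVec_of_forall_dotProduct_eq_zero {z : n → ℝ}
    (hz : ∀ a, w a ⬝ᵥ z = 0) : signedSwapMatrix w g ε *ᵥ z = z := by
  simp [signedSwapMatrix_mulVec, hz]

theorem signedSwapMatrix_mulVec_self [DecidableEq ι]
    (hw : ∀ a b, w a ⬝ᵥ w b = if a = b then 1 else 0) (b : ι) :
    signedSwapMatrix w g ε *ᵥ w b = ε b • w (g b) := by
  simp [signedSwapMatrix_mulVec, hw, ite_smul]

omit [Fintype n] in
theorem signedSwapMatrix_transpose (hg : g.Involutive) (hε : ∀ a, ε (g a) = ε a) :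
    (signedSwapMatrix w g ε)ᵀ = signedSwapMatrix w g ε := by
  simp only [signedSwapMatrix, transpose_add, transpose_sub, transpose_one, transpose_sum,
    transpose_vecMulVec]
  congr 1
  refine Fintype.sum_bijective g hg.bijective _ _ fun a => ?_
  rw [hg a, hε, vecMulVec_smul, smul_vecMulVec]

theorem signedSwapMatrix_mul_self [DecidableEq ι]
    (hw : ∀ a b, w a ⬝ᵥ w b = if a = b then 1 else 0) (hg : g.Involutive)
    (hε : ∀ a, ε a * ε (g a) = 1) :
    signedSwapMatrix w g ε * signedSwapMatrix w g ε = 1 := by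
  rw [ext_iff_mulVec]
  intro z
  rw [← mulVec_mulVec, one_mulVec, signedSwapMatrix_mulVec w g ε z, mulVec_add, mulVec_sub,
    mulVec_sum, mulVec_sum]
  simp only [mulVec_smul, signedSwapMatrix_mulVec_self hw, hg _, smul_smul, mul_assoc, hε,
    mul_one]
  rw [signedSwapMatrix_mulVec]
  simp only [smul_smul]
  abel

end SignedSwap

section Invariance

variable {ι n α : Type*} [Fintype ι] [Fintype n] [CommSemiring α] {R : Matrix n n α}
  {x : ι → n → α} {f : ι → ι}

theorem conj_sum_vecMulVec_self_of_bijective (hf : f.Bijective)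
    (hRx : ∀ i, R *ᵥ x i = x (f i)) :
    R * (∑ i, vecMulVec (x i) (x i)) * Rᵀ = ∑ i, vecMulVec (x i) (x i) := by
  simp only [Matrix.mul_sum, Matrix.sum_mul, mul_vecMulVec, vecMulVec_mul, vecMul_transpose, hRx]
  exact Fintype.sum_bijective f hf _ _ fun _ => rfl

theorem mulVec_sum_indicator_of_bijective (hf : f.Bijective) (hRx : ∀ i, R *ᵥ x i = x (f i))
    {s : Set ι} (hs : ∀ i, f i ∈ s ↔ i ∈ s) :
    R *ᵥ ∑ i, s.indicator x i = ∑ i, s.indicator x i := by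
  rw [mulVec_sum]
  refine Fintype.sum_bijective f hf _ _ fun i => ?_
  by_cases hi : i ∈ s
  · rw [Set.indicator_of_mem hi, Set.indicator_of_mem ((hs i).2 hi), hRx]
  · rw [Set.indicator_of_notMem hi, Set.indicator_of_notMem (mt (hs i).1 hi), mulVec_zero]

end Invariance

theorem Function.exists_involutive_swap {α γ : Type*} [Finite α] (c : α → γ) {P Q : α → Prop}
    (hPQ : ∀ a, P a → ¬ Q a)
    (hcard : ∀ g, Nat.card {a // P a ∧ c a = g} = Nat.card {a // Q a ∧ c a = g}) :
    ∃ f : α → α, f.Involutive ∧ (∀ a, c (f a) = c a) ∧ (∀ a, P a → Q (f a)) ∧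
      (∀ a, Q a → P (f a)) ∧ ∀ a, ¬ P a → ¬ Q a → f a = a := by
  classical
  have hfiber (g : γ) :
      Nonempty ({a : {a // P a} // c a = g} ≃ {a : {a // Q a} // c a = g}) := by
    rw [← Finite.card_eq, Nat.card_congr (Equiv.subtypeSubtypeEquivSubtypeInter P (c · = g)),
      Nat.card_congr (Equiv.subtypeSubtypeEquivSubtypeInter Q (c · = g))]
    exact hcard g
  let e : {a // P a} ≃ {a // Q a} := Equiv.ofFiberEquiv fun g => (hfiber g).some
  have he (a : {a // P a}) : c (e a) = c a :=
    Equiv.ofFiberEquiv_map (f := fun a : {a // P a} => c a) (g := fun a : {a // Q a} => c a) _ a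
  have he' (a : {a // Q a}) : c (e.symm a) = c a := by
    simpa using (he (e.symm a)).symm
  let f (a : α) : α := if h : P a then e ⟨a, h⟩ else if h' : Q a then e.symm ⟨a, h'⟩ else a
  have hfP (a) (h : P a) : f a = e ⟨a, h⟩ := dif_pos h
  have hfQ (a) (h : Q a) : f a = e.symm ⟨a, h⟩ := by
    simp only [f, dif_neg (fun hP => hPQ a hP h), dif_pos h]
  have hfid (a) (hP : ¬ P a) (hQ : ¬ Q a) : f a = a := by simp only [f, dif_neg hP, dif_neg hQ]
  refine ⟨f, fun a => ?_, fun a => ?_, fun a h => hfP a h ▸ (e _).2,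
    fun a h => hfQ a h ▸ (e.symm _).2, hfid⟩
  · by_cases hP : P a
    · rw [hfP a hP, hfQ _ (e _).2, Subtype.coe_eta, Equiv.symm_apply_apply]
    by_cases hQ : Q a
    · rw [hfQ a hQ, hfP _ (e.symm _).2, Subtype.coe_eta, Equiv.apply_symm_apply]
    · rw [hfid a hP hQ, hfid a hP hQ]
  · by_cases hP : P a
    · rw [hfP a hP, he]
    by_cases hQ : Q a
    · rw [hfQ a hQ, he']
    · rw [hfid a hP hQ]

section Dataset

variable {N K D : ℕ} {y ysub ρ : Fin N → ℝ} {κ : Fin N → ℕ} {k : ℕ}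

theorem exists_involutive_sign_flip (hy : ∀ i, y i = 1 ∨ y i = -1)
    (hysub : ∀ i, ysub i = 1 ∨ ysub i = -1) (hρ : ∀ i, ρ i = 1 ∨ ρ i = -1)
    (hbal : ∀ a b : ℝ, (a = 1 ∨ a = -1) → (b = 1 ∨ b = -1) →
      Set.ncard {i | y i = a ∧ ysub i = b ∧ κ i = k ∧ ρ i = 1}
        = Set.ncard {i | y i = a ∧ ysub i = b ∧ κ i = k ∧ ρ i = -1}) :
    ∃ f : Fin N → Fin N, f.Involutive ∧ (∀ i, y (f i) = y i) ∧ (∀ i, ysub (f i) = ysub i) ∧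
      (∀ i, κ i = k → κ (f i) = k ∧ ρ (f i) = -ρ i) ∧ ∀ i, κ i ≠ k → f i = i := by
  have hcard (g : ℝ × ℝ) : Nat.card {i // (κ i = k ∧ ρ i = 1) ∧ (y i, ysub i) = g}
      = Nat.card {i // (κ i = k ∧ ρ i = -1) ∧ (y i, ysub i) = g} := by
    obtain ⟨a, b⟩ := g
    have hncard (r : ℝ) : Nat.card {i // (κ i = k ∧ ρ i = r) ∧ (y i, ysub i) = (a, b)}
        = Set.ncard {i | y i = a ∧ ysub i = b ∧ κ i = k ∧ ρ i = r} :=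
      Nat.card_congr <| Equiv.subtypeEquivRight fun i => by
        simp only [Prod.mk.injEq, Set.mem_ofPred_eq]
        tauto
    rw [hncard, hncard]
    by_cases hab : (a = 1 ∨ a = -1) ∧ (b = 1 ∨ b = -1)
    · exact hbal a b hab.1 hab.2
    · have hempty (r : ℝ) : {i | y i = a ∧ ysub i = b ∧ κ i = k ∧ ρ i = r} = ∅ :=
        Set.eq_empty_of_forall_notMem fun i ⟨ha, hb, _⟩ => hab ⟨ha ▸ hy i, hb ▸ hysub i⟩
      rw [hempty, hempty]
  obtain ⟨f, hf, hfc, hfP, hfQ, hfid⟩ :=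
    Function.exists_involutive_swap (fun i => (y i, ysub i))
      (fun i hP hQ => by norm_num [hP.2] at hQ) hcard
  refine ⟨f, hf, fun i => congrArg Prod.fst (hfc i), fun i => congrArg Prod.snd (hfc i),
    fun i hi => ?_, fun i hi => hfid i (hi ·.1) (hi ·.1)⟩
  rcases hρ i with h | h
  · obtain ⟨h1, h2⟩ := hfP i ⟨hi, h⟩
    exact ⟨h1, by rw [h2, h]⟩
  · obtain ⟨h1, h2⟩ := hfQ i ⟨hi, h⟩
    exact ⟨h1, by rw [h2, h, neg_neg]⟩

theorem exists_reflection_of_sign_flip {v : ℕ → Fin D → ℝ} {φ : ℕ → ℝ} {μ σξ : ℝ}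
    {x : Fin N → Fin D → ℝ}
    (hortho : ∀ i j, i ≤ K + N → j ≤ K + N →
      (∑ t, v i t * v j t) = if i = j then (1 : ℝ) else 0)
    (hκ : ∀ i, 3 ≤ κ i ∧ κ i ≤ K)
    (hx : ∀ i, x i = fun t => v 0 t + y i * φ 1 * v 1 t + (ysub i * φ 2 + μ) * v 2 t
      + ρ i * φ (κ i) * v (κ i) t + σξ * v (K + 1 + i.1) t)
    (hk3 : 3 ≤ k) (hkK : k ≤ K) {f : Fin N → Fin N} (hf : f.Involutive)
    (hfy : ∀ i, y (f i) = y i) (hfysub : ∀ i, ysub (f i) = ysub i)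
    (hfk : ∀ i, κ i = k → κ (f i) = k ∧ ρ (f i) = -ρ i) (hfid : ∀ i, κ i ≠ k → f i = i) :
    ∃ R : Matrix (Fin D) (Fin D) ℝ,
      Rᵀ = R ∧ R * R = 1 ∧ R *ᵥ v k = -v k ∧ ∀ i, R *ᵥ x i = x (f i) := by
  classical
  -- `none` indexes `v k` (sign `-1`), `some j` the noise direction `v (K + 1 + j)` (sign `1`).
  let idx (o : Option (Fin N)) : ℕ := o.elim k (K + 1 + ·.1)
  have hidx_le (o) : idx o ≤ K + N := by
    cases o with
    | none => simp only [idx, Option.elim_none]; omega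
    | some j => simp only [idx, Option.elim_some]; omega
  have hidx_inj : idx.Injective := by
    rintro (_ | a) (_ | b) h <;> simp only [idx, Option.elim_none, Option.elim_some] at h
    · rfl
    · omega
    · omega
    · exact congrArg some (Fin.ext (by omega))
  let w (o : Option (Fin N)) : Fin D → ℝ := v (idx o)
  let ε (o : Option (Fin N)) : ℝ := o.elim (-1) fun _ => 1
  have hw (a b) : w a ⬝ᵥ w b = if a = b then 1 else 0 :=
    (hortho _ _ (hidx_le a) (hidx_le b)).trans (if_congr hidx_inj.eq_iff rfl rfl)
  have hg : (Option.map f).Involutive := by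
    rintro (_ | a) <;> simp [hf _]
  have hε (o) : ε (o.map f) = ε o := by cases o <;> rfl
  have hε1 (o) : ε o * ε (o.map f) = 1 := by cases o <;> norm_num [ε]
  set R := signedSwapMatrix w (Option.map f) ε
  have hRfix (c : ℕ) (hcK : c ≤ K) (hck : c ≠ k) : R *ᵥ v c = v c := by
    refine signedSwapMatrix_mulVec_of_forall_dotProduct_eq_zero fun o => ?_
    refine (hortho _ _ (hidx_le o) (by omega)).trans (if_neg ?_)
    cases o with
    | none => exact Ne.symm hck
    | some j => simp only [idx, Option.elim_some]; omega
  have hRk : R *ᵥ v k = -v k := by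
    simpa [w, ε, idx] using signedSwapMatrix_mulVec_self (g := Option.map f) (ε := ε) hw none
  have hRnoise (j : Fin N) : R *ᵥ v (K + 1 + j.1) = v (K + 1 + (f j).1) := by
    simpa [w, ε, idx] using signedSwapMatrix_mulVec_self (g := Option.map f) (ε := ε) hw (some j)
  have hx' (i) : x i = v 0 + (y i * φ 1) • v 1 + (ysub i * φ 2 + μ) • v 2
      + (ρ i * φ (κ i)) • v (κ i) + σξ • v (K + 1 + i.1) := by
    rw [hx i]; rfl
  refine ⟨R, signedSwapMatrix_transpose hg hε, signedSwapMatrix_mul_self hw hg hε1, hRk,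
    fun i => ?_⟩
  rw [hx' i, hx' (f i)]
  simp only [mulVec_add, mulVec_smul, hRfix 0 (by omega) (by omega),
    hRfix 1 (by omega) (by omega), hRfix 2 (by omega) (by omega), hRnoise, hfy, hfysub]
  by_cases hi : κ i = k
  · obtain ⟨hκf, hρf⟩ := hfk i hi
    rw [hκf, hρf, hi, hRk]
    module
  · rw [hfid i hi, hRfix (κ i) (hκ i).2 hi]

theorem dotProduct_pinv_mulVec_classSum_eq_zero {v : ℕ → Fin D → ℝ} {φ : ℕ → ℝ} {μ σξ : ℝ}
    {x : Fin N → Fin D → ℝ} {M Md : Matrix (Fin D) (Fin D) ℝ} {c : ℝ}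
    (hortho : ∀ i j, i ≤ K + N → j ≤ K + N →
      (∑ t, v i t * v j t) = if i = j then (1 : ℝ) else 0)
    (hy : ∀ i, y i = 1 ∨ y i = -1) (hysub : ∀ i, ysub i = 1 ∨ ysub i = -1)
    (hρ : ∀ i, ρ i = 1 ∨ ρ i = -1) (hκ : ∀ i, 3 ≤ κ i ∧ κ i ≤ K)
    (hbal : ∀ a b : ℝ, (a = 1 ∨ a = -1) → (b = 1 ∨ b = -1) →
      Set.ncard {i | y i = a ∧ ysub i = b ∧ κ i = k ∧ ρ i = 1}
        = Set.ncard {i | y i = a ∧ ysub i = b ∧ κ i = k ∧ ρ i = -1})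
    (hx : ∀ i, x i = fun t => v 0 t + y i * φ 1 * v 1 t + (ysub i * φ 2 + μ) * v 2 t
      + ρ i * φ (κ i) * v (κ i) t + σξ * v (K + 1 + i.1) t)
    (hM : M = c • ∑ i, vecMulVec (x i) (x i)) (hMd : IsPseudoinverse M Md)
    (hk3 : 3 ≤ k) (hkK : k ≤ K) (e : ℝ) :
    v k ⬝ᵥ Md *ᵥ ∑ i, Set.indicator {j | y j = e} x i = 0 := by
  obtain ⟨f, hf, hfy, hfysub, hfk, hfid⟩ := exists_involutive_sign_flip hy hysub hρ hbal
  obtain ⟨R, hRT, hRR, hRk, hRx⟩ :=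
    exists_reflection_of_sign_flip hortho hκ hx hk3 hkK hf hfy hfysub hfk hfid
  have hRM : R * M * Rᵀ = M := by
    rw [hM, Matrix.mul_smul, Matrix.smul_mul, conj_sum_vecMulVec_self_of_bijective hf.bijective hRx]
  have hRMd : R * Md * R = Md := by
    simpa only [hRT] using hMd.conj_eq_self (by rw [hRT, hRR]) hRM
  exact dotProduct_mulVec_eq_zero_of_reflection hRT hRMd hRk <|
    mulVec_sum_indicator_of_bijective hf.bijective hRx fun i => by
      simp only [Set.mem_ofPred_eq, hfy]

end Dataset

theorem stmt_13_general
    (m K n D : ℕ)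
    (φ : ℕ → ℝ)
    (μ σξ : ℝ)
    (v : ℕ → Fin D → ℝ)
    (hortho : ∀ i j, i ≤ K + m * n → j ≤ K + m * n →
      (∑ t, v i t * v j t) = if i = j then (1 : ℝ) else 0)
    (y ysub ρ : Fin (m * n) → ℝ) (κ : Fin (m * n) → ℕ)
    (hy : ∀ i, y i = 1 ∨ y i = -1)
    (hysub : ∀ i, ysub i = 1 ∨ ysub i = -1)
    (hρ : ∀ i, ρ i = 1 ∨ ρ i = -1)
    (hκ : ∀ i, 3 ≤ κ i ∧ κ i ≤ K)
    (hbal : ∀ (a b r : ℝ) (c : ℕ), (a = 1 ∨ a = -1) → (b = 1 ∨ b = -1) →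
      (r = 1 ∨ r = -1) → 3 ≤ c → c ≤ K →
      Set.ncard {i : Fin (m * n) | y i = a ∧ ysub i = b ∧ κ i = c ∧ ρ i = r}
        = m * n / (8 * (K - 2)))
    (x : Fin (m * n) → Fin D → ℝ)
    (hx : ∀ i, x i = fun t => v 0 t + y i * φ 1 * v 1 t + (ysub i * φ 2 + μ) * v 2 t
      + ρ i * φ (κ i) * v (κ i) t + σξ * v (K + 1 + i.1) t)
    (M Mp : Matrix (Fin D) (Fin D) ℝ)
    (hM : M = ((m * n : ℝ))⁻¹ • ∑ i, Matrix.vecMulVec (x i) (x i))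
    (xbar : ℝ → Fin D → ℝ)
    (hxbar : ∀ ε, xbar ε = (2 / (m * n : ℝ)) •
      ∑ i, Set.indicator {j : Fin (m * n) | y j = ε} x i)
    (hMp : Mp = (2 : ℝ)⁻¹ • (Matrix.vecMulVec (xbar 1) (xbar 1)
      + Matrix.vecMulVec (xbar (-1)) (xbar (-1))))
    (Md : Matrix (Fin D) (Fin D) ℝ) (hMd : IsPseudoinverse M Md) :
    (∀ k, 3 ≤ k → k ≤ K → (v k) ⬝ᵥ (Md * Mp * Md).mulVec (v k) = 0) ∧
    ∀ (q : ℕ) (W : Matrix (Fin q) (Fin D) ℝ),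
      Wᵀ * W = Md * Mp * Md → ∀ k, 3 ≤ k → k ≤ K → W.mulVec (v k) = 0 := by
  have hMd_symm : Mdᵀ = Md := hMd.transpose_eq_self <| by
    rw [hM, transpose_smul, transpose_sum]
    simp only [transpose_vecMulVec]
  have hkey (k : ℕ) (hk3 : 3 ≤ k) (hkK : k ≤ K) : (Md * Mp * Md) *ᵥ v k = 0 := by
    have hbal_k (a b : ℝ) (ha : a = 1 ∨ a = -1) (hb : b = 1 ∨ b = -1) :=
      (hbal a b 1 k ha hb (.inl rfl) hk3 hkK).trans (hbal a b (-1) k ha hb (.inr rfl) hk3 hkK).symm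
    have hmean (ε : ℝ) : xbar ε ⬝ᵥ Md *ᵥ v k = 0 := by
      rw [dotProduct_mulVec, ← mulVec_transpose, hMd_symm, dotProduct_comm, hxbar, mulVec_smul,
        dotProduct_smul, dotProduct_pinv_mulVec_classSum_eq_zero hortho hy hysub hρ hκ hbal_k hx hM
        hMd hk3 hkK, smul_zero]
    rw [← mulVec_mulVec, ← mulVec_mulVec, hMp, smul_mulVec, add_mulVec, vecMulVec_mulVec,
      vecMulVec_mulVec, hmean, hmean]
    simp
  refine ⟨fun k hk3 hkK => by rw [hkey k hk3 hkK, dotProduct_zero], fun q W hW k hk3 hkK => ?_⟩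
  rw [← conjTranspose_mul_self_mulVec_eq_zero, conjTranspose_eq_transpose_of_trivial, hW,
    hkey k hk3 hkK]

theorem stmt_13
    (m K n D : ℕ)
    (hm : 1 ≤ m) (hK : 3 ≤ K) (hn : 1 ≤ n) (hdiv : 8 * (K - 2) ∣ n)
    (hD : K + 1 + m * n ≤ D)
    (φ : ℕ → ℝ) (hφ : ∀ j, 1 ≤ j → j ≤ K → 0 < φ j)
    (μ σξ : ℝ) (hσ : 0 < σξ)
    (v : ℕ → Fin D → ℝ)
    (hortho : ∀ i j, i ≤ K + m * n → j ≤ K + m * n →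
      (∑ t, v i t * v j t) = if i = j then (1 : ℝ) else 0)
    (y ysub ρ : Fin (m * n) → ℝ) (κ : Fin (m * n) → ℕ)
    (hy : ∀ i, y i = 1 ∨ y i = -1)
    (hysub : ∀ i, ysub i = 1 ∨ ysub i = -1)
    (hρ : ∀ i, ρ i = 1 ∨ ρ i = -1)
    (hκ : ∀ i, 3 ≤ κ i ∧ κ i ≤ K)
    (hblock : ∀ i j : Fin (m * n), i.1 / m = j.1 / m →
      y i = y j ∧ ysub i = ysub j ∧ κ i = κ j ∧ ρ i = ρ j)
    (hbal : ∀ (a b r : ℝ) (c : ℕ), (a = 1 ∨ a = -1) → (b = 1 ∨ b = -1) →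
      (r = 1 ∨ r = -1) → 3 ≤ c → c ≤ K →
      Set.ncard {i : Fin (m * n) | y i = a ∧ ysub i = b ∧ κ i = c ∧ ρ i = r}
        = m * n / (8 * (K - 2)))
    (x : Fin (m * n) → Fin D → ℝ)
    (hx : ∀ i, x i = fun t => v 0 t + y i * φ 1 * v 1 t + (ysub i * φ 2 + μ) * v 2 t
      + ρ i * φ (κ i) * v (κ i) t + σξ * v (K + 1 + i.1) t)
    (M Mp : Matrix (Fin D) (Fin D) ℝ)
    (hM : M = ((m * n : ℝ))⁻¹ • ∑ i, Matrix.vecMulVec (x i) (x i))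
    (xbar : ℝ → Fin D → ℝ)
    (hxbar : ∀ ε, xbar ε = (2 / (m * n : ℝ)) •
      ∑ i, Set.indicator {j : Fin (m * n) | y j = ε} x i)
    (hMp : Mp = (2 : ℝ)⁻¹ • (Matrix.vecMulVec (xbar 1) (xbar 1)
      + Matrix.vecMulVec (xbar (-1)) (xbar (-1))))
    (Md : Matrix (Fin D) (Fin D) ℝ) (hMd : IsPseudoinverse M Md) :
    (∀ k, 3 ≤ k → k ≤ K → (v k) ⬝ᵥ (Md * Mp * Md).mulVec (v k) = 0) ∧
    ∀ (q : ℕ) (W : Matrix (Fin q) (Fin D) ℝ),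
      Wᵀ * W = Md * Mp * Md → ∀ k, 3 ≤ k → k ≤ K → W.mulVec (v k) = 0 :=
  stmt_13_general m K n D φ μ σξ v hortho y ysub ρ κ hy hysub hρ hκ hbal x hx M Mp hM xbar hxbar hMp
    Md hMd
end

section
/- (Corollary C.5, the class feature is learned by the min-norm solution matrix.) In the structured contrastive dataset, one has v_1ᵀ M† M⁺ M† v_1 > 0; equivalently, every real matrix W with WᵀW = M† M⁺ M† satisfies W v_1 ≠ 0. -/
open Matrix

lemma vecMulVec_mulVec' {D : ℕ} (a b u : Fin D → ℝ) :
    (Matrix.vecMulVec a b) *ᵥ u = (b ⬝ᵥ u) • a := by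
  ext t
  simp only [Matrix.mulVec, dotProduct, Matrix.vecMulVec_apply, Pi.smul_apply,
    smul_eq_mul, Finset.sum_mul]
  exact Finset.sum_congr rfl fun j _ => by ring

lemma sum_mulVec' {ι D : ℕ} (A : Fin ι → Matrix (Fin D) (Fin D) ℝ) (x : Fin D → ℝ) :
    (∑ i, A i) *ᵥ x = ∑ i, (A i) *ᵥ x := by
  ext t
  simp only [Matrix.mulVec, dotProduct, Matrix.sum_apply, Finset.sum_apply,
    Finset.sum_mul]
  exact Finset.sum_comm

lemma dotmv {D : ℕ} (A : Matrix (Fin D) (Fin D) ℝ) (x y : Fin D → ℝ) :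
    (A *ᵥ x) ⬝ᵥ y = x ⬝ᵥ (Aᵀ *ᵥ y) := by
  rw [Matrix.dotProduct_mulVec, Matrix.vecMul_transpose]

lemma pinv_unique {N : ℕ} {A B C : Matrix (Fin N) (Fin N) ℝ}
    (hB : IsPseudoinverse A B) (hC : IsPseudoinverse A C) : B = C := by
  obtain ⟨hB1, hB2, hB3, hB4⟩ := hB
  obtain ⟨hC1, hC2, hC3, hC4⟩ := hC
  have h1 : B * A = C * A := by
    calc B * A = (B * A)ᵀ := hB4.symm
      _ = (A * C * A)ᵀ * Bᵀ := by rw [hC1]; rw [Matrix.transpose_mul]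
      _ = (C * A)ᵀ * (B * A)ᵀ := by simp only [Matrix.transpose_mul, Matrix.mul_assoc]
      _ = (C * A) * (B * A) := by rw [hC4, hB4]
      _ = C * (A * B * A) := by simp only [Matrix.mul_assoc]
      _ = C * A := by rw [hB1]
  have h2 : A * B = A * C := by
    calc A * B = (A * B)ᵀ := hB3.symm
      _ = Bᵀ * (A * C * A)ᵀ := by rw [hC1]; rw [Matrix.transpose_mul]
      _ = (A * B)ᵀ * (A * C)ᵀ := by simp only [Matrix.transpose_mul, Matrix.mul_assoc]
      _ = (A * B) * (A * C) := by rw [hB3, hC3]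
      _ = (A * B * A) * C := by simp only [Matrix.mul_assoc]
      _ = A * C := by rw [hB1]
  calc B = B * A * B := hB2.symm
    _ = B * (A * C) := by rw [Matrix.mul_assoc, h2]
    _ = (B * A) * C := by rw [Matrix.mul_assoc]
    _ = (C * A) * C := by rw [h1]
    _ = C := hC2

theorem stmt_14
    (m K n D : ℕ)
    (hm : 1 ≤ m) (hK : 3 ≤ K) (hn : 1 ≤ n) (hdiv : 8 * (K - 2) ∣ n)
    (hD : K + 1 + m * n ≤ D)
    (φ : ℕ → ℝ) (hφ : ∀ j, 1 ≤ j → j ≤ K → 0 < φ j)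
    (μ σξ : ℝ) (hσ : 0 < σξ)
    (v : ℕ → Fin D → ℝ)
    (hortho : ∀ i j, i ≤ K + m * n → j ≤ K + m * n →
      (∑ t, v i t * v j t) = if i = j then (1 : ℝ) else 0)
    (y ysub ρ : Fin (m * n) → ℝ) (κ : Fin (m * n) → ℕ)
    (hy : ∀ i, y i = 1 ∨ y i = -1)
    (hysub : ∀ i, ysub i = 1 ∨ ysub i = -1)
    (hρ : ∀ i, ρ i = 1 ∨ ρ i = -1)
    (hκ : ∀ i, 3 ≤ κ i ∧ κ i ≤ K)
    (hblock : ∀ i j : Fin (m * n), i.1 / m = j.1 / m →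
      y i = y j ∧ ysub i = ysub j ∧ κ i = κ j ∧ ρ i = ρ j)
    (hbal : ∀ (a b r : ℝ) (c : ℕ), (a = 1 ∨ a = -1) → (b = 1 ∨ b = -1) →
      (r = 1 ∨ r = -1) → 3 ≤ c → c ≤ K →
      Set.ncard {i : Fin (m * n) | y i = a ∧ ysub i = b ∧ κ i = c ∧ ρ i = r}
        = m * n / (8 * (K - 2)))
    (x : Fin (m * n) → Fin D → ℝ)
    (hx : ∀ i, x i = fun t => v 0 t + y i * φ 1 * v 1 t + (ysub i * φ 2 + μ) * v 2 t
      + ρ i * φ (κ i) * v (κ i) t + σξ * v (K + 1 + i.1) t)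
    (M Mp : Matrix (Fin D) (Fin D) ℝ)
    (hM : M = ((m * n : ℝ))⁻¹ • ∑ i, Matrix.vecMulVec (x i) (x i))
    (xbar : ℝ → Fin D → ℝ)
    (hxbar : ∀ ε, xbar ε = (2 / (m * n : ℝ)) •
      ∑ i, Set.indicator {j : Fin (m * n) | y j = ε} x i)
    (hMp : Mp = (2 : ℝ)⁻¹ • (Matrix.vecMulVec (xbar 1) (xbar 1)
      + Matrix.vecMulVec (xbar (-1)) (xbar (-1))))
    (Md : Matrix (Fin D) (Fin D) ℝ) (hMd : IsPseudoinverse M Md) :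
    0 < (v 1) ⬝ᵥ (Md * Mp * Md).mulVec (v 1) ∧
    ∀ (q : ℕ) (W : Matrix (Fin q) (Fin D) ℝ),
      Wᵀ * W = Md * Mp * Md → W.mulVec (v 1) ≠ 0 := by
  have hmn : 0 < m * n := Nat.mul_pos hm hn
  have hN : (0:ℝ) < (m : ℝ) * n := by exact_mod_cast hmn
  have hNne : (m : ℝ) * n ≠ 0 := ne_of_gt hN
  have hφ1 : 0 < φ 1 := hφ 1 le_rfl (by omega)
  -- dot product of data points with v 1
  have hxv1 : ∀ i : Fin (m * n), x i ⬝ᵥ v 1 = y i * φ 1 := by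
    intro i
    have e : ∀ t, x i t * v 1 t =
        v 0 t * v 1 t + (y i * φ 1) * (v 1 t * v 1 t) + (ysub i * φ 2 + μ) * (v 2 t * v 1 t)
        + (ρ i * φ (κ i)) * (v (κ i) t * v 1 t) + σξ * (v (K + 1 + i.1) t * v 1 t) := by
      intro t; rw [hx i]; ring
    have hκi := hκ i
    have hi2 := i.2
    have h01 := hortho 0 1 (by omega) (by omega)
    have h11 := hortho 1 1 (by omega) (by omega)
    have h21 := hortho 2 1 (by omega) (by omega)
    have hk1 := hortho (κ i) 1 (by omega) (by omega)
    have hK1 := hortho (K + 1 + i.1) 1 (by omega) (by omega)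
    simp only [dotProduct, e, Finset.sum_add_distrib, ← Finset.mul_sum]
    rw [h01, h11, h21, hk1, hK1]
    rw [if_neg (by omega : (0:ℕ) ≠ 1), if_pos rfl, if_neg (by omega : (2:ℕ) ≠ 1),
      if_neg (by omega : κ i ≠ 1), if_neg (by omega : K + 1 + i.1 ≠ 1)]
    ring
  set S : Fin D → ℝ := ∑ i : Fin (m * n), y i • x i with hS
  have hMv1 : M *ᵥ v 1 = (((m:ℝ) * n)⁻¹ * φ 1) • S := by
    rw [hM]
    push_cast
    rw [Matrix.smul_mulVec, sum_mulVec']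
    rw [← smul_smul]
    congr 1
    rw [Finset.smul_sum]
    apply Finset.sum_congr rfl
    intro i _
    rw [vecMulVec_mulVec', hxv1 i, smul_smul, mul_comm]
  have hwS : xbar 1 - xbar (-1) = (2 / ((m:ℝ) * n)) • S := by
    rw [hxbar 1, hxbar (-1)]
    push_cast
    rw [← smul_sub, ← Finset.sum_sub_distrib]
    congr 1
    apply Finset.sum_congr rfl
    intro i _
    rcases hy i with h | h
    · rw [Set.indicator_of_mem (by simpa [Set.mem_setOf_eq] using h),
        Set.indicator_of_notMem (by simp [Set.mem_setOf_eq, h]; norm_num), h, one_smul,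
        sub_zero]
    · rw [Set.indicator_of_notMem (by simp [Set.mem_setOf_eq, h]; norm_num),
        Set.indicator_of_mem (by simpa [Set.mem_setOf_eq] using h), h, zero_sub, neg_smul,
        one_smul]
  have hMv1w : M *ᵥ v 1 = (φ 1 / 2) • (xbar 1 - xbar (-1)) := by
    rw [hMv1, hwS, smul_smul]
    congr 1
    field_simp
  have hSv1 : v 1 ⬝ᵥ S = ((m:ℝ) * n) * φ 1 := by
    rw [dotProduct_comm]
    have e1 : S ⬝ᵥ v 1 = ∑ i : Fin (m * n), y i * (x i ⬝ᵥ v 1) := by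
      simp only [hS, dotProduct, Finset.sum_apply, Pi.smul_apply, smul_eq_mul,
        Finset.sum_mul, Finset.mul_sum]
      rw [Finset.sum_comm]
      apply Finset.sum_congr rfl
      intro i _
      apply Finset.sum_congr rfl
      intro t _
      ring
    rw [e1]
    have e2 : ∀ i : Fin (m * n), y i * (x i ⬝ᵥ v 1) = φ 1 := by
      intro i
      rw [hxv1 i]
      rcases hy i with h | h <;> rw [h] <;> ring
    rw [Finset.sum_congr rfl fun i _ => e2 i, Finset.sum_const, Finset.card_univ,
      Fintype.card_fin, nsmul_eq_mul]
    push_cast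
    ring
  have hv1Mv1 : v 1 ⬝ᵥ (M *ᵥ v 1) = φ 1 ^ 2 := by
    rw [hMv1, dotProduct_smul, hSv1, smul_eq_mul]
    field_simp
  have hMsym : Mᵀ = M := by
    rw [hM]
    ext s t
    simp [Matrix.transpose_apply, Matrix.sum_apply, Matrix.vecMulVec_apply, mul_comm]
  have hMdsym : Mdᵀ = Md := by
    obtain ⟨h1, h2, h3, h4⟩ := hMd
    have hC : IsPseudoinverse M Mdᵀ := by
      refine ⟨?_, ?_, ?_, ?_⟩
      · calc M * Mdᵀ * M = Mᵀ * Mdᵀ * Mᵀ := by rw [hMsym]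
          _ = (M * Md * M)ᵀ := by simp only [Matrix.transpose_mul, Matrix.mul_assoc]
          _ = Mᵀ := by rw [h1]
          _ = M := hMsym
      · calc Mdᵀ * M * Mdᵀ = Mdᵀ * Mᵀ * Mdᵀ := by rw [hMsym]
          _ = (Md * M * Md)ᵀ := by simp only [Matrix.transpose_mul, Matrix.mul_assoc]
          _ = Mdᵀ := by rw [h2]
      · calc (M * Mdᵀ)ᵀ = Md * Mᵀ := by rw [Matrix.transpose_mul, Matrix.transpose_transpose]
          _ = Md * M := by rw [hMsym]
          _ = (Md * M)ᵀ := h4.symm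
          _ = Mᵀ * Mdᵀ := by rw [Matrix.transpose_mul]
          _ = M * Mdᵀ := by rw [hMsym]
      · calc (Mdᵀ * M)ᵀ = Mᵀ * Md := by rw [Matrix.transpose_mul, Matrix.transpose_transpose]
          _ = M * Md := by rw [hMsym]
          _ = (M * Md)ᵀ := h3.symm
          _ = Mdᵀ * Mᵀ := by rw [Matrix.transpose_mul]
          _ = Mdᵀ * M := by rw [hMsym]
    exact (pinv_unique hC ⟨h1, h2, h3, h4⟩)
  obtain ⟨hp1, hp2, hp3, hp4⟩ := hMd
  have hcomm : M * Md = Md * M := by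
    calc M * Md = (M * Md)ᵀ := hp3.symm
      _ = Mdᵀ * Mᵀ := by rw [Matrix.transpose_mul]
      _ = Md * M := by rw [hMdsym, hMsym]
  set u : Fin D → ℝ := Md *ᵥ v 1 with hu
  set z : Fin D → ℝ := (Md * M) *ᵥ v 1 with hz
  have hMMd : (Md * M) * (Md * M) = Md * M := by
    calc (Md * M) * (Md * M) = Md * (M * Md * M) := by simp only [Matrix.mul_assoc]
      _ = Md * M := by rw [hp1]
  have hzz : z ⬝ᵥ z = v 1 ⬝ᵥ z := by
    rw [hz, dotmv, hp4, Matrix.mulVec_mulVec, hMMd]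
  have hqpos : 0 < (M *ᵥ v 1) ⬝ᵥ u := by
    have e1 : (M *ᵥ v 1) ⬝ᵥ u = v 1 ⬝ᵥ z := by
      rw [hu, dotmv, hMsym, Matrix.mulVec_mulVec, hcomm]
    rw [e1, ← hzz]
    have hnn : 0 ≤ z ⬝ᵥ z := Finset.sum_nonneg fun t _ => mul_self_nonneg _
    rcases eq_or_ne z 0 with h | h
    · exfalso
      have : M *ᵥ v 1 = 0 := by
        have : M *ᵥ v 1 = M *ᵥ z := by
          rw [hz, Matrix.mulVec_mulVec, ← Matrix.mul_assoc, hp1]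
        rw [this, h, Matrix.mulVec_zero]
      rw [this, dotProduct_zero] at hv1Mv1
      exact absurd hv1Mv1.symm (ne_of_gt (pow_pos hφ1 2))
    · exact lt_of_le_of_ne hnn fun h0 => h (dotProduct_self_eq_zero.mp h0.symm)
  set a : ℝ := xbar 1 ⬝ᵥ u with ha
  set b : ℝ := xbar (-1) ⬝ᵥ u with hb
  have hmain : v 1 ⬝ᵥ ((Md * Mp * Md) *ᵥ v 1) = 2⁻¹ * (a ^ 2 + b ^ 2) := by
    have e0 : (Md * Mp * Md) *ᵥ v 1 = Md *ᵥ (Mp *ᵥ u) := by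
      rw [hu, Matrix.mulVec_mulVec, Matrix.mulVec_mulVec]
    have e1 : v 1 ⬝ᵥ (Md *ᵥ (Mp *ᵥ u)) = u ⬝ᵥ (Mp *ᵥ u) := by
      have hvm : v 1 ᵥ* Md = u := by
        rw [← hMdsym]
        exact Matrix.vecMul_transpose Md (v 1)
      rw [Matrix.dotProduct_mulVec, hvm]
    rw [e0, e1, hMp, Matrix.smul_mulVec, Matrix.add_mulVec, vecMulVec_mulVec',
      vecMulVec_mulVec', dotProduct_smul, dotProduct_add,
      dotProduct_smul, dotProduct_smul]
    rw [dotProduct_comm u (xbar 1), dotProduct_comm u (xbar (-1))]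
    rw [← ha, ← hb]
    simp only [smul_eq_mul]
    ring
  have hdiff : 0 < a - b := by
    have h' : (M *ᵥ v 1) ⬝ᵥ u = (φ 1 / 2) * (a - b) := by
      rw [hMv1w, smul_dotProduct, sub_dotProduct, ha, hb, smul_eq_mul]
    have h2 : 0 < (φ 1 / 2) * (a - b) := h' ▸ hqpos
    nlinarith
  have hpos : 0 < v 1 ⬝ᵥ ((Md * Mp * Md) *ᵥ v 1) := by
    rw [hmain]
    nlinarith [sq_nonneg (a + b), sq_nonneg (a - b)]
  refine ⟨hpos, ?_⟩
  intro q W hW hWv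
  have e : v 1 ⬝ᵥ ((Wᵀ * W) *ᵥ v 1) = (W *ᵥ v 1) ⬝ᵥ (W *ᵥ v 1) := by
    rw [← Matrix.mulVec_mulVec, Matrix.dotProduct_mulVec, Matrix.vecMul_transpose]
  rw [hW, hWv, dotProduct_zero] at e
  exact absurd e (ne_of_gt hpos)
end

section
/- (Cross-covariance identity used in the proof of Lemma E.3.) Let z_1, …, z_C ∈ ℝ^d be linearly independent, let y : {1,…,n} → {1,…,C} be a labeling in which every class is nonempty with n_c = #{i : y_i = c}, and let a_1, …, a_n ∈ ℝ^d be arbitrary. Define Z = (1/n) Σ_{i=1}^n z_{y_i} z_{y_i}ᵀ and ā_c = (1/n_c) Σ_{i : y_i = c} a_i. Then ((1/n) Σ_{i=1}^n a_i z_{y_i}ᵀ) Z† ((1/n) Σ_{i=1}^n z_{y_i} a_iᵀ) = Σ_{c=1}^C (n_c/n) ā_c ā_cᵀ. -/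
open Matrix

section helpers
variable {d n C : ℕ}

lemma helper1 (u v w x : Fin d → ℝ) (M : Matrix (Fin d) (Fin d) ℝ) :
    vecMulVec u v * M * vecMulVec w x = (v ⬝ᵥ M *ᵥ w) • vecMulVec u x := by
  ext p q
  simp only [Matrix.mul_apply, vecMulVec_apply, Matrix.smul_apply, dotProduct, mulVec,
    Finset.sum_mul, Finset.mul_sum, smul_eq_mul]
  rw [Finset.sum_comm]
  exact Finset.sum_congr rfl fun s _ => Finset.sum_congr rfl fun r _ => by ring

lemma helper2 (z : Fin n → Fin d → ℝ) (w : Fin d → ℝ) :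
    (∑ i, vecMulVec (z i) (z i)) *ᵥ w = ∑ i, (z i ⬝ᵥ w) • z i := by
  ext p
  simp only [mulVec, dotProduct, vecMulVec_apply, Matrix.sum_apply, Finset.sum_apply,
    Pi.smul_apply, smul_eq_mul, Finset.sum_mul, Finset.mul_sum]
  rw [Finset.sum_comm]
  exact Finset.sum_congr rfl fun s _ => Finset.sum_congr rfl fun r _ => by ring

lemma helper3 {M : Type*} [AddCommMonoid M] [Module ℝ M] (y : Fin n → Fin C)
    (nc : Fin C → ℕ) (hnc : ∀ c, nc c = (Finset.univ.filter (fun i => y i = c)).card)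
    (f : Fin C → M) :
    ∑ i, f (y i) = ∑ c, (nc c : ℝ) • f c := by
  rw [← Finset.sum_fiberwise Finset.univ y (fun i => f (y i))]
  refine Finset.sum_congr rfl fun c _ => ?_
  rw [Finset.sum_congr rfl (fun i hi => by rw [(Finset.mem_filter.1 hi).2]),
    Finset.sum_const, hnc c, Nat.cast_smul_eq_nsmul]

lemma helper5 (r s : ℝ) (u v : Fin d → ℝ) :
    vecMulVec (r • u) (s • v) = (r * s) • vecMulVec u v := by
  ext p q
  simp [vecMulVec_apply]
  ring

lemma helper6 {ι κ : Type*} [Fintype ι] (s : Finset ι) (u : ι → Fin d → ℝ) (v : κ → Fin d → ℝ)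
    (t : Finset κ) [Fintype κ] :
    vecMulVec (∑ c ∈ s, u c) (∑ c ∈ t, v c) = ∑ c ∈ s, ∑ c' ∈ t, vecMulVec (u c) (v c') := by
  ext p q
  simp only [vecMulVec_apply, Matrix.sum_apply, Finset.sum_apply, Finset.sum_mul,
    Finset.mul_sum]
  rw [Finset.sum_comm]

lemma helper7 {ι : Type*} (s : Finset ι) (w : Fin d → ℝ) (g : ι → Fin d → ℝ) :
    w ⬝ᵥ ∑ c ∈ s, g c = ∑ c ∈ s, w ⬝ᵥ g c := by
  simp only [dotProduct, Finset.sum_apply, Finset.mul_sum]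
  rw [Finset.sum_comm]
end helpers

theorem stmt_17
    (d n C : ℕ)
    (z : Fin C → Fin d → ℝ) (hz : LinearIndependent ℝ z)
    (y : Fin n → Fin C) (hysurj : Function.Surjective y)
    (nc : Fin C → ℕ) (hnc : ∀ c, nc c = (Finset.univ.filter (fun i => y i = c)).card)
    (a : Fin n → Fin d → ℝ)
    (Z : Matrix (Fin d) (Fin d) ℝ)
    (hZ : Z = (n : ℝ)⁻¹ • ∑ i, Matrix.vecMulVec (z (y i)) (z (y i)))
    (Zd : Matrix (Fin d) (Fin d) ℝ) (hZd : IsPseudoinverse Z Zd)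
    (abar : Fin C → Fin d → ℝ)
    (habar : ∀ c, abar c = ((nc c : ℝ))⁻¹ •
      ∑ i ∈ Finset.univ.filter (fun i => y i = c), a i) :
    ((n : ℝ)⁻¹ • ∑ i, Matrix.vecMulVec (a i) (z (y i))) * Zd *
      ((n : ℝ)⁻¹ • ∑ i, Matrix.vecMulVec (z (y i)) (a i)) =
    ∑ c, ((nc c : ℝ) / n) • Matrix.vecMulVec (abar c) (abar c) := by
  rcases Nat.eq_zero_or_pos n with hn | hn
  · -- degenerate case
    subst hn
    have hC : C = 0 := by
      by_contra h
      obtain ⟨i, -⟩ := hysurj ⟨0, Nat.pos_of_ne_zero h⟩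
      exact i.elim0
    subst hC
    simp
  have hn' : (n : ℝ) ≠ 0 := Nat.cast_ne_zero.2 hn.ne'
  have hncpos : ∀ c, 0 < nc c := by
    intro c
    obtain ⟨i, hi⟩ := hysurj c
    rw [hnc c]
    exact Finset.card_pos.2 ⟨i, Finset.mem_filter.2 ⟨Finset.mem_univ i, hi⟩⟩
  have hnc' : ∀ c, (nc c : ℝ) ≠ 0 := fun c => Nat.cast_ne_zero.2 (hncpos c).ne'
  obtain ⟨h1, h2, h3, h4⟩ := hZd
  -- Z applied to a vector
  have hZmul : ∀ w : Fin d → ℝ, Z *ᵥ w = ∑ c, ((nc c : ℝ) * (n : ℝ)⁻¹ * (z c ⬝ᵥ w)) • z c := by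
    intro w
    rw [hZ, smul_mulVec, helper2,
      helper3 y nc hnc (fun c => (z c ⬝ᵥ w) • z c), Finset.smul_sum]
    refine Finset.sum_congr rfl fun c _ => ?_
    rw [smul_smul, smul_smul]
    ring_nf
  -- kernel characterization
  have hker : ∀ w : Fin d → ℝ, Z *ᵥ w = 0 → ∀ c, z c ⬝ᵥ w = 0 := by
    intro w hw c
    have h0 : w ⬝ᵥ (Z *ᵥ w) = 0 := by rw [hw, dotProduct_zero]
    rw [hZmul w, helper7] at h0
    have h0' : ∑ c, (nc c : ℝ) * (n : ℝ)⁻¹ * (z c ⬝ᵥ w) ^ 2 = 0 := by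
      rw [← h0]
      refine Finset.sum_congr rfl fun c _ => ?_
      rw [dotProduct_smul, smul_eq_mul, dotProduct_comm]
      ring
    have hterm := (Finset.sum_eq_zero_iff_of_nonneg (fun c _ => by positivity)).1 h0' c
      (Finset.mem_univ c)
    have : (z c ⬝ᵥ w) ^ 2 = 0 :=
      (mul_eq_zero.1 hterm).resolve_left (mul_ne_zero (hnc' c) (inv_ne_zero hn'))
    exact pow_eq_zero_iff (two_ne_zero) |>.1 this
  -- Z is symmetric
  have hZsymm : Zᵀ = Z := by
    rw [hZ, transpose_smul, transpose_sum]
    congr 1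
    refine Finset.sum_congr rfl fun i _ => ?_
    ext p q
    simp [vecMulVec_apply, transpose_apply, mul_comm]
  -- Z * (Z * Zd) = Z
  have hZP : Z * (Z * Zd) = Z := by
    have ht : (Z * (Z * Zd))ᵀ = Z := by
      rw [transpose_mul, h3, hZsymm, h1]
    calc Z * (Z * Zd) = ((Z * (Z * Zd))ᵀ)ᵀ := by rw [transpose_transpose]
    _ = Zᵀ := by rw [ht]
    _ = Z := hZsymm
  -- projection fixes z c
  have hproj : ∀ c, (Z * Zd) *ᵥ z c = z c := by
    intro c
    have hdot : ∀ w, z c ⬝ᵥ ((Z * Zd) *ᵥ w) = z c ⬝ᵥ w := by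
      intro w
      have hzero : Z *ᵥ (w - (Z * Zd) *ᵥ w) = 0 := by
        rw [mulVec_sub, mulVec_mulVec, hZP, sub_self]
      have := hker _ hzero c
      rw [dotProduct_sub, sub_eq_zero] at this
      exact this.symm
    have hvm : z c ᵥ* (Z * Zd) = z c := by
      funext q
      have := hdot (Pi.single q 1)
      rwa [dotProduct_mulVec, dotProduct_single, dotProduct_single, mul_one, mul_one] at this
    conv_rhs => rw [← hvm]
    rw [← mulVec_transpose, h3]
  -- key orthogonality
  have hkey : ∀ c c', (nc c : ℝ) * (n : ℝ)⁻¹ * (z c ⬝ᵥ Zd *ᵥ z c') =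
      if c = c' then 1 else 0 := by
    intro c c'
    have hexp : (Z * Zd) *ᵥ z c' = ∑ b, ((nc b : ℝ) * (n : ℝ)⁻¹ * (z b ⬝ᵥ Zd *ᵥ z c')) • z b := by
      rw [← mulVec_mulVec, hZmul]
    have hdelta : z c' = ∑ b, (if b = c' then (1:ℝ) else 0) • z b := by
      simp
    have hsum : ∑ b, (((nc b : ℝ) * (n : ℝ)⁻¹ * (z b ⬝ᵥ Zd *ᵥ z c')) -
        (if b = c' then (1:ℝ) else 0)) • z b = 0 := by
      rw [Finset.sum_congr rfl (fun b _ => sub_smul _ _ (z b)), Finset.sum_sub_distrib,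
        ← hexp, hproj c', ← hdelta, sub_self]
    have := Fintype.linearIndependent_iff.1 hz _ hsum c
    linarith [this]
  -- final computation
  rw [smul_mul_assoc, smul_mul_assoc, mul_smul_comm, Finset.sum_mul, Finset.mul_sum]
  -- scalar value of z (y i) ⬝ᵥ Zd *ᵥ z (y j)
  have hzd : ∀ i j : Fin n, z (y i) ⬝ᵥ Zd *ᵥ z (y j)
      = if y i = y j then (n : ℝ) / (nc (y i) : ℝ) else 0 := by
    intro i j
    have hk := hkey (y i) (y j)
    rcases eq_or_ne (y i) (y j) with h | h
    · rw [if_pos h] at hk ⊢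
      rw [eq_div_iff (hnc' (y i))]
      field_simp at hk
      linear_combination hk
    · rw [if_neg h] at hk ⊢
      exact (mul_eq_zero.1 hk).resolve_left (mul_ne_zero (hnc' _) (inv_ne_zero hn'))
  have step1 : ∀ j : Fin n, (∑ i, vecMulVec (a i) (z (y i)) * Zd) * vecMulVec (z (y j)) (a j)
      = ∑ i, (if y i = y j then (n : ℝ) / (nc (y i) : ℝ) else 0) • vecMulVec (a i) (a j) := by
    intro j
    rw [Finset.sum_mul]
    exact Finset.sum_congr rfl fun i _ => by rw [helper1, hzd i j]
  rw [Finset.sum_congr rfl fun j _ => step1 j]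
  rw [← Finset.sum_fiberwise Finset.univ y
    (fun j => ∑ i, (if y i = y j then (n : ℝ) / (nc (y i) : ℝ) else 0) • vecMulVec (a i) (a j))]
  simp only [Finset.smul_sum]
  refine Finset.sum_congr rfl fun c _ => ?_
  have hc : ∀ j ∈ Finset.univ.filter (fun j => y j = c),
      (∑ i, (n : ℝ)⁻¹ • (n : ℝ)⁻¹ •
        ((if y i = y j then (n : ℝ) / (nc (y i) : ℝ) else 0) • vecMulVec (a i) (a j)))
      = ∑ i ∈ Finset.univ.filter (fun i => y i = c),
          (((n : ℝ) * (nc c : ℝ))⁻¹) • vecMulVec (a i) (a j) := by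
    intro j hj
    rw [Finset.sum_filter]
    refine Finset.sum_congr rfl fun i _ => ?_
    rw [(Finset.mem_filter.1 hj).2]
    by_cases h : y i = c
    · rw [if_pos h, if_pos h, h, smul_smul, smul_smul]
      congr 1
      field_simp
    · rw [if_neg h, if_neg h, zero_smul, smul_zero, smul_zero]
  rw [Finset.sum_congr rfl hc, Finset.sum_comm]
  rw [habar c, helper5, helper6]
  simp only [Finset.smul_sum]
  refine Finset.sum_congr rfl fun i _ => Finset.sum_congr rfl fun j _ => ?_
  rw [smul_smul]
  congr 1
  field_simp [hnc' c]
end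

section
/- (Lemma E.4, orthogonal splitting of linearly independent vectors.) Suppose d ≥ 3n − 2 and x_1, …, x_n ∈ ℝ^d are linearly independent. Then there exist nonzero pairwise-orthogonal vectors v_1, …, v_n ∈ ℝ^d and vectors u_1, …, u_n ∈ ℝ^d such that x_i = v_i + u_i for every i, and ⟨v_i, u_j⟩ = 0 for all i, j ∈ {1, …, n}. -/
/-!
Let `K` be the span of the `x i` and `y` the dual family of `x` in `K`, so `⟪y i, x j⟫ = δᵢⱼ`.
For `t ≥ ∑ ‖y i‖²` the matrix `t • 1 - gram y` is positive semidefinite by Cauchy–Schwarz, hence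
it is the Gram matrix of vectors `w i` in `Kᗮ` as soon as `dim Kᗮ ≥ n`, i.e. `d ≥ 2n` (which
`d ≥ 3n - 2` gives for `n ≥ 2`; for `n = 1` take `v = x`, `u = 0`). Then `z i = y i + w i`
satisfies `⟪z i, z j⟫ = t δᵢⱼ` and `⟪z i, x j⟫ = δᵢⱼ`, so `v i = t⁻¹ • z i` has
`⟪v i, v j⟫ = ⟪v i, x j⟫ = t⁻¹ δᵢⱼ`, and `u i = x i - v i` is orthogonal to every `v j`.
-/

open Module Matrix Submodule Set
open scoped InnerProductSpace MatrixOrder ComplexOrder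

theorem norm_sum_smul_sq_le {𝕜 ι E : Type*} [RCLike 𝕜] [NormedAddCommGroup E]
    [NormedSpace 𝕜 E] [Fintype ι] (c : ι → 𝕜) (y : ι → E) :
    ‖∑ i, c i • y i‖ ^ 2 ≤ (∑ i, ‖c i‖ ^ 2) * ∑ i, ‖y i‖ ^ 2 :=
  calc ‖∑ i, c i • y i‖ ^ 2 ≤ (∑ i, ‖c i‖ * ‖y i‖) ^ 2 := by
        gcongr
        exact (norm_sum_le _ _).trans_eq (by simp [norm_smul])
    _ ≤ _ := Finset.sum_mul_sq_le_sq_mul_sq _ _ _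

section

variable {𝕜 ι E : Type*} [RCLike 𝕜] [NormedAddCommGroup E] [InnerProductSpace 𝕜 E]

theorem LinearIndependent.exists_inner_eq_ite [Finite ι] [DecidableEq ι] {x : ι → E}
    (hx : LinearIndependent 𝕜 x) :
    ∃ y : ι → E, (∀ i, y i ∈ span 𝕜 (range x)) ∧
      ∀ i j, ⟪y i, x j⟫_𝕜 = if i = j then 1 else 0 := by
  have : FiniteDimensional 𝕜 (span 𝕜 (range x)) :=
    FiniteDimensional.span_of_finite 𝕜 (finite_range x)
  let b := Basis.span hx
  refine ⟨fun i => (InnerProductSpace.toDual 𝕜 (span 𝕜 (range x))).symm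
    (b.coord i).toContinuousLinearMap, fun i => Subtype.property _, fun i j => ?_⟩
  have hb : ((b j : span 𝕜 (range x)) : E) = x j := by rw [Basis.span_apply]
  rw [← hb, ← coe_inner, InnerProductSpace.toDual_symm_apply]
  simp [Finsupp.single_apply, eq_comm]

theorem Matrix.PosSemidef.exists_gram_eq [Fintype ι] [FiniteDimensional 𝕜 E]
    {M : Matrix ι ι 𝕜} (hM : M.PosSemidef) (hcard : Fintype.card ι ≤ finrank 𝕜 E) :
    ∃ w : ι → E, gram 𝕜 w = M := by
  classical
  obtain ⟨B, rfl⟩ := CStarAlgebra.nonneg_iff_eq_star_mul_self.mp hM.nonneg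
  obtain ⟨e⟩ := Function.Embedding.nonempty_of_card_le (hcard.trans (Fintype.card_fin _).ge)
  let f : ι → E := stdOrthonormalBasis 𝕜 E ∘ e
  have hf : Orthonormal 𝕜 f := (stdOrthonormalBasis 𝕜 E).orthonormal.comp e e.injective
  refine ⟨fun i => ∑ k, B k i • f k, ?_⟩
  ext i j
  simp [hf.inner_sum, mul_apply]

end

section

variable {ι F : Type*} [NormedAddCommGroup F] [InnerProductSpace ℝ F]

theorem Matrix.posSemidef_smul_one_sub_gram [Fintype ι] [DecidableEq ι] (y : ι → F) {t : ℝ}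
    (ht : ∑ i, ‖y i‖ ^ 2 ≤ t) : (t • (1 : Matrix ι ι ℝ) - gram ℝ y).PosSemidef := by
  refine .of_dotProduct_mulVec_nonneg
    ((isHermitian_one.smul (IsSelfAdjoint.all t)).sub (isHermitian_gram ℝ y)) fun c => ?_
  have hcs := norm_sum_smul_sq_le c y
  have hc : 0 ≤ ∑ i, ‖c i‖ ^ 2 := by positivity
  have hdot : star c ⬝ᵥ (t • c) = t * ∑ i, ‖c i‖ ^ 2 := by
    simp [dotProduct, Finset.mul_sum, sq, mul_left_comm]
  rw [sub_mulVec, dotProduct_sub, star_dotProduct_gram_mulVec, real_inner_self_eq_norm_sq,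
    smul_mulVec, one_mulVec, hdot]
  nlinarith

theorem LinearIndependent.exists_orthogonal_split [Fintype ι] [FiniteDimensional ℝ F]
    {x : ι → F} (hx : LinearIndependent ℝ x) (hdim : 2 * Fintype.card ι ≤ finrank ℝ F) :
    ∃ v : ι → F, (∀ i, v i ≠ 0) ∧ Pairwise (fun i j => ⟪v i, v j⟫_ℝ = 0) ∧
      ∀ i j, ⟪v i, x j - v j⟫_ℝ = 0 := by
  classical
  set K := span ℝ (range x)
  have hK : Fintype.card ι ≤ finrank ℝ Kᗮ := by
    have := K.finrank_add_finrank_orthogonal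
    rw [finrank_span_eq_card hx] at this
    omega
  obtain ⟨y, hyK, hyx⟩ := hx.exists_inner_eq_ite
  obtain ⟨t, ht, hyt⟩ : ∃ t : ℝ, 0 < t ∧ ∑ i, ‖y i‖ ^ 2 ≤ t :=
    ⟨1 + ∑ i, ‖y i‖ ^ 2, by positivity, by linarith⟩
  obtain ⟨w, hw⟩ := (posSemidef_smul_one_sub_gram y hyt).exists_gram_eq hK
  have hyw : ∀ i j, ⟪y i, (w j : F)⟫_ℝ = 0 := fun i j =>
    inner_right_of_mem_orthogonal (hyK i) (w j).2
  have hwy : ∀ i j, ⟪(w i : F), y j⟫_ℝ = 0 := fun i j =>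
    inner_left_of_mem_orthogonal (hyK j) (w i).2
  have hwx : ∀ i j, ⟪(w i : F), x j⟫_ℝ = 0 := fun i j =>
    inner_left_of_mem_orthogonal (subset_span (mem_range_self j)) (w i).2
  have hzz : ∀ i j, ⟪y i + w i, y j + w j⟫_ℝ = if i = j then t else 0 := by
    intro i j
    have hwij := congrFun (congrFun hw i) j
    simp only [gram_apply, coe_inner] at hwij
    simp [inner_add_left, inner_add_right, hyw, hwy, hwij, one_apply]
  have hzx : ∀ i j, ⟪y i + w i, x j⟫_ℝ = if i = j then 1 else 0 := by
    intro i j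
    rw [inner_add_left, hyx, hwx, add_zero]
  refine ⟨fun i => t⁻¹ • (y i + w i), fun i h => ?_, fun i j hij => ?_, fun i j => ?_⟩
  · have := hzz i i
    rw [smul_eq_zero_iff_right (inv_ne_zero ht.ne')] at h
    simp [h, ht.ne] at this
  · simp only [real_inner_smul_left, real_inner_smul_right, hzz, if_neg hij, mul_zero]
  · rw [inner_sub_right, real_inner_smul_left, real_inner_smul_left, real_inner_smul_right, hzx,
      hzz]
    split_ifs <;> field_simp <;> ring

end

theorem stmt_18_general (n d : ℕ) (hd : 3 * n - 2 ≤ d)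
    (x : Fin n → Fin d → ℝ) (hx : LinearIndependent ℝ x) :
    ∃ (v u : Fin n → Fin d → ℝ),
      (∀ i, v i ≠ 0) ∧
      (∀ i j, i ≠ j → (∑ t, v i t * v j t) = 0) ∧
      (∀ i, x i = v i + u i) ∧
      (∀ i j, (∑ t, v i t * u j t) = 0) := by
  rcases eq_or_ne n 1 with rfl | hn
  · exact ⟨x, 0, hx.ne_zero, fun i j hij => absurd (Subsingleton.elim i j) hij, by simp, by simp⟩
  have hx' : LinearIndependent ℝ (fun i => WithLp.toLp 2 (x i)) :=
    hx.map' (WithLp.linearEquiv 2 ℝ _).symm.toLinearMap (LinearEquiv.ker _)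
  obtain ⟨v, hv0, hvv, hvu⟩ := hx'.exists_orthogonal_split
    (by rw [finrank_euclideanSpace_fin, Fintype.card_fin]; omega)
  refine ⟨fun i => (v i).ofLp, fun i => x i - (v i).ofLp, fun i => by simpa using hv0 i,
    fun i j hij => by simpa [PiLp.inner_apply, mul_comm] using hvv hij, fun i => by simp,
    fun i j => by simpa [PiLp.inner_apply, mul_comm] using hvu i j⟩

theorem stmt_18 (n d : ℕ) (hn : 0 < n) (hd0 : 0 < d) (hd : 3 * n - 2 ≤ d)
    (x : Fin n → Fin d → ℝ) (hx : LinearIndependent ℝ x) :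
    ∃ (v u : Fin n → Fin d → ℝ),
      (∀ i, v i ≠ 0) ∧
      (∀ i j, i ≠ j → (∑ t, v i t * v j t) = 0) ∧
      (∀ i, x i = v i + u i) ∧
      (∀ i j, (∑ t, v i t * u j t) = 0) :=
  stmt_18_general n d hd x hx
end
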